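/- arXiv:1712.03023 — 10 statements merged into one kernel-verified Lean document; each statement's English description precedes it below -/
import Mathlib

section
/- For every point x of a compact metric space X, every continuous map f : X → X, every ε > 0 and every positive integer n, the following inequalities hold for all positive integers h: ((n+h)/n)² · C_m(x, n+h, ε) − (2hn + h²)/n² ≤ C_m(f^h(x), n, ε) ≤ ((n+h)/n)² · C_m(x, n+h, ε). -/
/-!
Shifting the orbit by `h` turns the pairs `(i, j) ∈ [0, n)²` counted in `C_m(f^h x, n, ε)`
bijectively into the pairs `(i + h, j + h)` counted in `C_m(x, n + h, ε)` whose coordinates are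
both at least `h`. The remaining pairs of `[0, n + h)²` form an L-shaped region of
`(n + h)² - n² = 2hn + h²` points, which gives both inequalities after dividing by `n²`.
-/

open Filter Metric Set
open scoped Classical

namespace RQA

variable {X : Type*} [MetricSpace X]

/-- Correlation sum `C_m(x,n,ε)` with respect to the Bowen metric `ρ_m`:
`ρ_m(f^[i] x, f^[j] x) ≤ ε ↔ ∀ k < m, dist (f^[i+k] x) (f^[j+k] x) ≤ ε`. -/
noncomputable def corrSum (f : X → X) (x : X) (m n : ℕ) (ε : ℝ) : ℝ :=
  (((Finset.range n ×ˢ Finset.range n).filter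
      (fun p => ∀ k < m, dist (f^[p.1 + k] x) (f^[p.2 + k] x) ≤ ε)).card : ℝ) / (n : ℝ) ^ 2

/-- Correlation sum `C_∞(x,n,ε)` with respect to the metric `ρ_∞`. -/
noncomputable def corrSumInf (f : X → X) (x : X) (n : ℕ) (ε : ℝ) : ℝ :=
  (((Finset.range n ×ˢ Finset.range n).filter
      (fun p => ∀ k : ℕ, dist (f^[p.1 + k] x) (f^[p.2 + k] x) ≤ ε)).card : ℝ) / (n : ℝ) ^ 2

/-- Lower asymptotic correlation sum `C̲_m(x,ε)`. -/
noncomputable def lowerCorr (f : X → X) (x : X) (m : ℕ) (ε : ℝ) : ℝ :=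
  liminf (fun n => corrSum f x m n ε) atTop

/-- Upper asymptotic correlation sum `C̄_m(x,ε)`. -/
noncomputable def upperCorr (f : X → X) (x : X) (m : ℕ) (ε : ℝ) : ℝ :=
  limsup (fun n => corrSum f x m n ε) atTop

/-- Recurrence `m`-determinism `DET_m(x,n,ε) = C_m(x,n,ε)/C_1(x,n,ε)`. -/
noncomputable def detSum (f : X → X) (x : X) (m n : ℕ) (ε : ℝ) : ℝ :=
  corrSum f x m n ε / corrSum f x 1 n ε

/-- Recurrence `∞`-determinism `DET_∞(x,n,ε) = C_∞(x,n,ε)/C_1(x,n,ε)`. -/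
noncomputable def detSumInf (f : X → X) (x : X) (n : ℕ) (ε : ℝ) : ℝ :=
  corrSumInf f x n ε / corrSum f x 1 n ε

/-- Lower asymptotic recurrence determinism `DET̲_m(x,ε)`. -/
noncomputable def lowerDet (f : X → X) (x : X) (m : ℕ) (ε : ℝ) : ℝ :=
  liminf (fun n => detSum f x m n ε) atTop

/-- Upper asymptotic recurrence determinism `DET̄_m(x,ε)`. -/
noncomputable def upperDet (f : X → X) (x : X) (m : ℕ) (ε : ℝ) : ℝ :=
  limsup (fun n => detSum f x m n ε) atTop

/-- `C̄_∞(x,ε) = lim_m C̄_m(x,ε)`; since `m ↦ C̄_m(x,ε)` is non-increasing,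
the limit equals the infimum over `m ≥ 1`. -/
noncomputable def upperCorrInf (f : X → X) (x : X) (ε : ℝ) : ℝ :=
  ⨅ m : ℕ, upperCorr f x (m + 1) ε

/-- `C̲_∞(x,ε) = lim_m C̲_m(x,ε)` (a limit of a non-increasing sequence). -/
noncomputable def lowerCorrInf (f : X → X) (x : X) (ε : ℝ) : ℝ :=
  ⨅ m : ℕ, lowerCorr f x (m + 1) ε

/-- `DET̄_∞(x,ε) = lim_m DET̄_m(x,ε)` (a limit of a non-increasing sequence). -/
noncomputable def upperDetInf (f : X → X) (x : X) (ε : ℝ) : ℝ :=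
  ⨅ m : ℕ, upperDet f x (m + 1) ε

/-- `DET̲_∞(x,ε) = lim_m DET̲_m(x,ε)` (a limit of a non-increasing sequence). -/
noncomputable def lowerDetInf (f : X → X) (x : X) (ε : ℝ) : ℝ :=
  ⨅ m : ℕ, lowerDet f x (m + 1) ε

/-- The ω-limit set of `x`: the set of limit points of the trajectory `(f^[n] x)`. -/
def omegaSet (f : X → X) (x : X) : Set X :=
  {y | ∃ φ : ℕ → ℕ, StrictMono φ ∧ Tendsto (fun n => f^[φ n] x) atTop (nhds y)}

/-- Distance between two subsets of `ℝ`. -/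
noncomputable def setDist (A B : Set ℝ) : ℝ :=
  sInf {d | ∃ a ∈ A, ∃ b ∈ B, d = dist a b}

/-- The binary word of length `t` given by the binary digits of `n`
(the 2-adic encoding, least significant digit first; addition of integers to
words is addition with carry from left to right, i.e. ordinary addition of the
encoded values modulo `2^t`). -/
def word (t n : ℕ) : Fin t → Bool := fun i => n.testBit i.val

/-- The value `∑ w_i 2^i` of a binary word under the 2-adic encoding. -/
def encodeWord {t : ℕ} (w : Fin t → Bool) : ℕ :=
  ∑ i : Fin t, if w i then 2 ^ i.val else 0

end RQA

open RQA

open scoped Finset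

namespace RQA

section PairCounting

variable (P : ℕ × ℕ → Prop) [DecidablePred P] (n h : ℕ)

lemma card_filter_add_le :
    #{p ∈ Finset.range n ×ˢ Finset.range n | P (p + (h, h))}
      ≤ #{p ∈ Finset.range (n + h) ×ˢ Finset.range (n + h) | P p} := by
  refine Finset.card_le_card_of_injOn (· + (h, h)) (fun p hp => ?_) (add_left_injective _).injOn
  simp only [Finset.coe_filter, Finset.mem_product, Finset.mem_range, Set.mem_ofPred_eq,
    Prod.fst_add, Prod.snd_add] at hp ⊢
  exact ⟨⟨by omega, by omega⟩, hp.2⟩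

lemma card_range_product_sdiff_Ico_product :
    #(Finset.range (n + h) ×ˢ Finset.range (n + h) \
        Finset.Ico h (n + h) ×ˢ Finset.Ico h (n + h)) = 2 * h * n + h ^ 2 := by
  have hIco : Finset.Ico h (n + h) ⊆ Finset.range (n + h) := fun i hi =>
    Finset.mem_range.2 (Finset.mem_Ico.1 hi).2
  have hsub := Finset.product_subset_product hIco hIco
  rw [Finset.card_sdiff_of_subset hsub]
  simp only [Finset.card_product, Finset.card_range, Nat.card_Ico, Nat.add_sub_cancel]
  rw [Nat.sub_eq_of_eq_add]
  ring

lemma card_filter_le_card_filter_add_add :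
    #{p ∈ Finset.range (n + h) ×ˢ Finset.range (n + h) | P p}
      ≤ #{p ∈ Finset.range n ×ˢ Finset.range n | P (p + (h, h))} + (2 * h * n + h ^ 2) := by
  set B := {p ∈ Finset.range n ×ˢ Finset.range n | P (p + (h, h))}
  have hsub : {p ∈ Finset.range (n + h) ×ˢ Finset.range (n + h) | P p} ⊆
      B.image (· + (h, h)) ∪ (Finset.range (n + h) ×ˢ Finset.range (n + h) \
        Finset.Ico h (n + h) ×ˢ Finset.Ico h (n + h)) := by
    rintro ⟨i, j⟩ hp
    simp only [Finset.mem_filter, Finset.mem_product, Finset.mem_range] at hp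
    by_cases hij : h ≤ i ∧ h ≤ j
    · have hshift : (i - h, j - h) + (h, h) = (i, j) :=
        Prod.ext (Nat.sub_add_cancel hij.1) (Nat.sub_add_cancel hij.2)
      refine Finset.mem_union_left _ (Finset.mem_image.2 ⟨(i - h, j - h), ?_, hshift⟩)
      simp only [B, Finset.mem_filter, Finset.mem_product, Finset.mem_range, hshift]
      exact ⟨⟨by omega, by omega⟩, hp.2⟩
    · refine Finset.mem_union_right _ ?_
      simp only [Finset.mem_sdiff, Finset.mem_product, Finset.mem_range, Finset.mem_Ico]
      omega
  calc _ ≤ #(B.image (· + (h, h)) ∪ _) := Finset.card_le_card hsub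
    _ ≤ #(B.image (· + (h, h))) + _ := Finset.card_union_le _ _
    _ ≤ #B + (2 * h * n + h ^ 2) := by
      rw [card_range_product_sdiff_Ico_product]
      exact Nat.add_le_add_right Finset.card_image_le _

end PairCounting

section Bowen

variable {X : Type*} [MetricSpace X]

/-- `ρ_m(f^[p.1] x, f^[p.2] x) ≤ ε`. -/
def BowenClose (f : X → X) (x : X) (m : ℕ) (ε : ℝ) (p : ℕ × ℕ) : Prop :=
  ∀ k < m, dist (f^[p.1 + k] x) (f^[p.2 + k] x) ≤ ε

lemma corrSum_eq_card_bowenClose (f : X → X) (x : X) (m n : ℕ) (ε : ℝ) :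
    corrSum f x m n ε
      = #{p ∈ Finset.range n ×ˢ Finset.range n | BowenClose f x m ε p} / (n : ℝ) ^ 2 := by
  unfold corrSum BowenClose
  congr

lemma bowenClose_iterate_iff (f : X → X) (x : X) (m h : ℕ) (ε : ℝ) (p : ℕ × ℕ) :
    BowenClose f (f^[h] x) m ε p ↔ BowenClose f x m ε (p + (h, h)) := by
  simp only [BowenClose, ← Function.iterate_add_apply, Prod.fst_add, Prod.snd_add,
    add_right_comm _ h]

lemma corrSum_iterate_eq (f : X → X) (x : X) (m n h : ℕ) (ε : ℝ) :
    corrSum f (f^[h] x) m n ε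
      = #{p ∈ Finset.range n ×ˢ Finset.range n | BowenClose f x m ε (p + (h, h))}
          / (n : ℝ) ^ 2 := by
  rw [corrSum_eq_card_bowenClose]
  congr 3
  exact Finset.filter_congr fun p _ => bowenClose_iterate_iff f x m h ε p

end Bowen

end RQA

theorem stmt_1_general {X : Type*} [MetricSpace X]
    (f : X → X) (x : X) (ε : ℝ) (m : ℕ) (n : ℕ) :
    ∀ h : ℕ, 0 < h →
      ((n + h : ℝ) / n) ^ 2 * corrSum f x m (n + h) ε
          - (2 * h * n + h ^ 2) / (n : ℝ) ^ 2
        ≤ corrSum f (f^[h] x) m n ε ∧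
      corrSum f (f^[h] x) m n ε ≤ ((n + h : ℝ) / n) ^ 2 * corrSum f x m (n + h) ε := by
  intro h hh
  set A := #{p ∈ Finset.range (n + h) ×ˢ Finset.range (n + h) | BowenClose f x m ε p}
  set B := #{p ∈ Finset.range n ×ˢ Finset.range n | BowenClose f x m ε (p + (h, h))}
  have hrescale : ((n + h : ℝ) / n) ^ 2 * corrSum f x m (n + h) ε = A / (n : ℝ) ^ 2 := by
    have : (n + h : ℝ) ≠ 0 := by positivity
    rw [corrSum_eq_card_bowenClose, div_pow, Nat.cast_add, div_mul_div_comm, mul_comm,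
      mul_div_mul_right _ _ (pow_ne_zero 2 this)]
  have hBA : (B : ℝ) ≤ A := by exact_mod_cast card_filter_add_le (BowenClose f x m ε) n h
  have hAB : (A : ℝ) ≤ B + (2 * h * n + h ^ 2) := by
    exact_mod_cast card_filter_le_card_filter_add_add (BowenClose f x m ε) n h
  rw [hrescale, corrSum_iterate_eq, ← sub_div]
  exact ⟨by gcongr; linarith, by gcongr⟩

/-- elementary inequalities between `C_m(f^h(x), n, ε)` and
`C_m(x, n+h, ε)`. -/
theorem stmt_1 {X : Type*} [MetricSpace X] [CompactSpace X]
    (f : X → X) (hf : Continuous f) (x : X) (ε : ℝ) (hε : 0 < ε)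
    (m : ℕ) (hm : 0 < m) (n : ℕ) (hn : 0 < n) :
    ∀ h : ℕ, 0 < h →
      ((n + h : ℝ) / n) ^ 2 * corrSum f x m (n + h) ε
          - (2 * h * n + h ^ 2) / (n : ℝ) ^ 2
        ≤ corrSum f (f^[h] x) m n ε ∧
      corrSum f (f^[h] x) m n ε ≤ ((n + h : ℝ) / n) ^ 2 * corrSum f x m (n + h) ε :=
  stmt_1_general f x ε m n
end

section
/- Let X be a compact metric space and ε > 0. Then there exists η ∈ (0,1) such that for every continuous map f : X → X, every x ∈ X, and every positive integer m, the lower asymptotic correlation sum satisfies C̲_m(x, ε) ≥ η^m (and hence also C̄_m(x, ε) ≥ η^m). -/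
open Filter Metric Set
open scoped Classical

open RQA

open Finset in
lemma corr_key {X : Type*} [MetricSpace X] {ε : ℝ} (t : Finset X)
    (c : X → {z // z ∈ t}) (hc : ∀ y, dist y (c y).1 < ε / 2)
    (f : X → X) (x : X) (m n : ℕ) :
    (n : ℝ) ^ 2 / (t.card : ℝ) ^ m ≤
      (((Finset.range n ×ˢ Finset.range n).filter
        (fun p => ∀ k < m, dist (f^[p.1 + k] x) (f^[p.2 + k] x) ≤ ε)).card : ℝ) := by
  classical
  have htpos : 0 < t.card := Finset.card_pos.mpr ⟨_, (c x).2⟩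
  set W : ℕ → (Fin m → {z // z ∈ t}) := fun i k => c (f^[i + k.1] x) with hW
  set fib : (Fin m → {z // z ∈ t}) → Finset ℕ :=
    fun w => (range n).filter (fun i => W i = w) with hfib
  have hsum : ∑ w : (Fin m → {z // z ∈ t}), (fib w).card = n := by
    rw [← Finset.card_range n]
    exact (Finset.card_eq_sum_card_fiberwise (fun i _ => Finset.mem_univ (W i))).symm
  set P : Finset (ℕ × ℕ) := (range n ×ˢ range n).filter (fun p => W p.1 = W p.2) with hP
  have hPcard : P.card = ∑ w : (Fin m → {z // z ∈ t}), (fib w).card ^ 2 := by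
    rw [Finset.card_eq_sum_card_fiberwise
      (f := fun p : ℕ × ℕ => W p.1) (t := Finset.univ) (fun p _ => Finset.mem_univ _)]
    refine Finset.sum_congr rfl fun w _ => ?_
    have h : P.filter (fun p => W p.1 = w) = fib w ×ˢ fib w := by
      ext p
      simp only [hP, hfib, Finset.mem_filter, Finset.mem_product]
      constructor
      · rintro ⟨⟨⟨h1, h2⟩, he⟩, hw⟩
        exact ⟨⟨h1, hw⟩, h2, hw ▸ he.symm⟩
      · rintro ⟨⟨h1, hw1⟩, h2, hw2⟩
        exact ⟨⟨⟨h1, h2⟩, hw1.trans hw2.symm⟩, hw1⟩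
    rw [h, Finset.card_product, sq]
  have hK : (Fintype.card (Fin m → {z // z ∈ t}) : ℝ) = (t.card : ℝ) ^ m := by
    simp [Fintype.card_fun]
  have hCS : (n : ℝ) ^ 2 ≤ (t.card : ℝ) ^ m * (P.card : ℝ) := by
    have h := sq_sum_le_card_mul_sum_sq
      (s := (Finset.univ : Finset (Fin m → {z // z ∈ t})))
      (f := fun w => ((fib w).card : ℝ))
    rw [Finset.card_univ] at h
    calc (n : ℝ) ^ 2 = (∑ w : (Fin m → {z // z ∈ t}), ((fib w).card : ℝ)) ^ 2 := by
          rw [← Nat.cast_sum, hsum]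
      _ ≤ (Fintype.card (Fin m → {z // z ∈ t}) : ℝ) *
            ∑ w : (Fin m → {z // z ∈ t}), ((fib w).card : ℝ) ^ 2 := h
      _ = (t.card : ℝ) ^ m * (P.card : ℝ) := by
          rw [hK, hPcard]; push_cast; ring
  have hsub : P ⊆ (Finset.range n ×ˢ Finset.range n).filter
      (fun p => ∀ k < m, dist (f^[p.1 + k] x) (f^[p.2 + k] x) ≤ ε) := by
    intro p hp
    simp only [hP, Finset.mem_filter] at hp ⊢
    refine ⟨hp.1, fun k hk => ?_⟩
    have he : c (f^[p.1 + k] x) = c (f^[p.2 + k] x) := congrFun hp.2 ⟨k, hk⟩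
    calc dist (f^[p.1 + k] x) (f^[p.2 + k] x)
        ≤ dist (f^[p.1 + k] x) (c (f^[p.1 + k] x)).1
          + dist (c (f^[p.2 + k] x)).1 (f^[p.2 + k] x) := by
          rw [he]; exact dist_triangle _ _ _
      _ ≤ ε / 2 + ε / 2 := by
          refine add_le_add (hc _).le ?_
          rw [dist_comm]; exact (hc _).le
      _ = ε := by ring
  have hle : (P.card : ℝ) ≤ _ := Nat.cast_le.mpr (Finset.card_le_card hsub)
  refine le_trans ?_ hle
  rw [div_le_iff₀ (by positivity)]
  linarith [hCS]

/-- a uniform exponential lower bound `η^m` for the lower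
asymptotic correlation sums on a compact metric space. -/
theorem stmt_2 {X : Type*} [MetricSpace X] [CompactSpace X] (ε : ℝ) (hε : 0 < ε) :
    ∃ η : ℝ, η ∈ Set.Ioo (0 : ℝ) 1 ∧
      ∀ f : X → X, Continuous f → ∀ x : X, ∀ m : ℕ, 0 < m →
        η ^ m ≤ lowerCorr f x m ε ∧ η ^ m ≤ upperCorr f x m ε := by
  classical
  obtain ⟨s, hsfin, hscov⟩ :=
    Metric.totallyBounded_iff.mp (isCompact_univ : IsCompact (Set.univ : Set X)).totallyBounded (ε / 2) (half_pos hε)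
  set t := hsfin.toFinset with ht
  have hcov : ∀ y : X, ∃ z ∈ t, dist y z < ε / 2 := by
    intro y
    have hy := hscov (Set.mem_univ y)
    simp only [Set.mem_iUnion, Metric.mem_ball] at hy
    obtain ⟨z, hz, hd⟩ := hy
    exact ⟨z, hsfin.mem_toFinset.mpr hz, hd⟩
  refine ⟨1 / (t.card + 2 : ℝ), ⟨by positivity, by
    rw [div_lt_one (by positivity)]
    have : (0 : ℝ) ≤ (t.card : ℝ) := Nat.cast_nonneg _
    linarith⟩, ?_⟩
  intro f hf x m hm
  let c : X → {z // z ∈ t} := fun y => ⟨(hcov y).choose, (hcov y).choose_spec.1⟩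
  have hc : ∀ y, dist y (c y).1 < ε / 2 := fun y => (hcov y).choose_spec.2
  have htpos : 0 < t.card := Finset.card_pos.mpr ⟨_, (c x).2⟩
  have htpos' : (0 : ℝ) < (t.card : ℝ) ^ m := by positivity
  -- eventual lower bound
  have hev : ∀ᶠ n in atTop, (1 / (t.card + 2 : ℝ)) ^ m ≤ corrSum f x m n ε := by
    filter_upwards [eventually_gt_atTop 0] with n hn
    have key := corr_key t c hc f x m n
    have hn2 : (0 : ℝ) < (n : ℝ) ^ 2 := by positivity
    have h1 : (1 / (t.card + 2 : ℝ)) ^ m ≤ 1 / (t.card : ℝ) ^ m := by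
      rw [div_pow, one_pow]
      apply one_div_le_one_div_of_le htpos'
      apply pow_le_pow_left₀ (Nat.cast_nonneg _)
      linarith
    refine h1.trans ?_
    unfold corrSum
    rw [le_div_iff₀ hn2, one_div, inv_mul_le_iff₀ htpos', mul_comm]
    rw [div_le_iff₀ htpos'] at key
    linarith
  -- boundedness
  have hub : ∀ n, corrSum f x m n ε ≤ 1 := by
    intro n
    unfold corrSum
    rcases Nat.eq_zero_or_pos n with h | h
    · simp [h]
    · rw [div_le_one (by positivity)]
      have hcle := Finset.card_filter_le (Finset.range n ×ˢ Finset.range n)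
        (fun p => ∀ k < m, dist (f^[p.1 + k] x) (f^[p.2 + k] x) ≤ ε)
      calc (_ : ℝ) ≤ ((Finset.range n ×ˢ Finset.range n).card : ℝ) := Nat.cast_le.mpr hcle
        _ = (n : ℝ) ^ 2 := by
          rw [Finset.card_product, Finset.card_range]; push_cast; ring
  have hlb : ∀ n, 0 ≤ corrSum f x m n ε := by
    intro n; unfold corrSum; positivity
  have hbdd_le : Filter.IsBoundedUnder (· ≤ ·) atTop (fun n => corrSum f x m n ε) :=
    ⟨1, Filter.eventually_map.mpr (Filter.Eventually.of_forall hub)⟩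
  have hbdd_ge : Filter.IsBoundedUnder (· ≥ ·) atTop (fun n => corrSum f x m n ε) :=
    ⟨0, Filter.eventually_map.mpr (Filter.Eventually.of_forall hlb)⟩
  have hliminf : (1 / (t.card + 2 : ℝ)) ^ m ≤ lowerCorr f x m ε :=
    Filter.le_liminf_of_le hbdd_le.isCoboundedUnder_ge hev
  exact ⟨hliminf, hliminf.trans (Filter.liminf_le_limsup hbdd_le hbdd_ge)⟩
end

section
/- Let (X,f) be a dynamical system, x ∈ X a point whose ω-limit set is finite of cardinality p. Then for every sufficiently small ε > 0 and every positive integer m, the asymptotic correlation sum exists and equals 1/p, i.e. lim_{n→∞} C_m(x,n,ε) = 1/p, and consequently the asymptotic recurrence determinism exists and equals 1. -/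
open Filter Metric Set
open scoped Classical

open RQA

/-!
Eventually the orbit of `x` is shadowed by the orbit of a point `y ∈ ω(x)`: the set `ω(x)` is
finite, hence `δ₀`-separated, and attracts the orbit, so once `f^[n] x` is close to `y`,
uniform continuity puts `f^[n + 1] x` close to `f y`, and separation makes `f y` the only point of
`ω(x)` nearby. Since the orbit of `x` returns near every point of `ω(x)` infinitely often, `y` is
periodic and `ω(x)` is its orbit, so its minimal period is `p`. For `ε < δ₀ / 3` and large `i, j`
this gives `dist (f^[i] x) (f^[j] x) ≤ ε ↔ i ≡ j [MOD p]`, and the same for the Bowen distance.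
Hence, up to `O(n)` pairs, `C_m(x, n, ε)` counts the pairs `i ≡ j [MOD p]` in `[0, n)²`,
of which there are `n² / p + O(n)`.
-/

lemma Set.Finite.exists_pos_le_dist {X : Type*} [MetricSpace X] {s : Set X}
    (hs : s.Finite) : ∃ δ > 0, ∀ y ∈ s, ∀ z ∈ s, y ≠ z → δ ≤ dist y z := by
  have h : ∀ᶠ δ in nhdsWithin (0 : ℝ) (Ioi 0), ∀ y ∈ s, ∀ z ∈ s, y ≠ z → δ ≤ dist y z := by
    simp only [eventually_all_finite hs]
    intro y _ z _
    by_cases hyz : y = z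
    · simp [hyz]
    · exact eventually_nhdsWithin_of_eventually_nhds <|
        (eventually_le_nhds (dist_pos.2 hyz)).mono fun _ h _ => h
  exact (h.and self_mem_nhdsWithin).exists.imp fun δ h => ⟨h.2, h.1⟩

namespace RQA

open Function

def pairCount (P : ℕ → ℕ → Prop) [DecidableRel P] (n : ℕ) : ℕ :=
  ((Finset.range n ×ˢ Finset.range n).filter (fun q => P q.1 q.2)).card

noncomputable def pairDensity (P : ℕ → ℕ → Prop) [DecidableRel P] (n : ℕ) : ℝ :=
  pairCount P n / (n : ℝ) ^ 2

section PairDensity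

variable {P Q : ℕ → ℕ → Prop} [DecidableRel P] [DecidableRel Q] {M : ℕ}

lemma pairCount_le_add_of_forall_ge (h : ∀ i ≥ M, ∀ j ≥ M, P i j → Q i j) (n : ℕ) :
    pairCount P n ≤ pairCount Q n + 2 * M * n := by
  have hsub : (Finset.range n ×ˢ Finset.range n).filter (fun q => P q.1 q.2)
      ⊆ (Finset.range n ×ˢ Finset.range n).filter (fun q => Q q.1 q.2)
        ∪ (Finset.range M ×ˢ Finset.range n ∪ Finset.range n ×ˢ Finset.range M) := by
    rintro ⟨i, j⟩ hij
    simp only [Finset.mem_filter, Finset.mem_product, Finset.mem_range, Finset.mem_union] at hij ⊢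
    by_cases hM : M ≤ i ∧ M ≤ j
    · exact Or.inl ⟨hij.1, h i hM.1 j hM.2 hij.2⟩
    · omega
  calc _ ≤ _ := Finset.card_le_card hsub
    _ ≤ _ := (Finset.card_union_le _ _).trans (Nat.add_le_add_left (Finset.card_union_le _ _) _)
    _ = _ := by simp only [pairCount, Finset.card_product, Finset.card_range]; ring

lemma abs_pairDensity_sub_le (h : ∀ i ≥ M, ∀ j ≥ M, (P i j ↔ Q i j)) (n : ℕ) :
    |pairDensity P n - pairDensity Q n| ≤ 2 * M / n := by
  rcases n.eq_zero_or_pos with rfl | hn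
  · simp [pairDensity]
  have hPQ := pairCount_le_add_of_forall_ge (fun i hi j hj => (h i hi j hj).1) n
  have hQP := pairCount_le_add_of_forall_ge (fun i hi j hj => (h i hi j hj).2) n
  have hcount : |(pairCount P n : ℝ) - pairCount Q n| ≤ 2 * M * n := by
    rw [abs_sub_le_iff]
    rify at hPQ hQP
    constructor <;> linarith
  calc _ = |(pairCount P n : ℝ) - pairCount Q n| / (n : ℝ) ^ 2 := by
        rw [pairDensity, pairDensity, ← sub_div, abs_div, abs_sq]
    _ ≤ 2 * M * n / (n : ℝ) ^ 2 := by gcongr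
    _ = 2 * M / n := by field_simp

lemma tendsto_pairDensity_congr {l : ℝ} (h : ∀ i ≥ M, ∀ j ≥ M, (P i j ↔ Q i j))
    (hQ : Tendsto (pairDensity Q) atTop (nhds l)) : Tendsto (pairDensity P) atTop (nhds l) := by
  have hdiff : Tendsto (fun n => pairDensity P n - pairDensity Q n) atTop (nhds 0) :=
    squeeze_zero_norm (abs_pairDensity_sub_le h) (tendsto_const_div_atTop_nhds_zero_nat _)
  simpa using hQ.add hdiff

end PairDensity

lemma pairCount_modEq (p n : ℕ) :
    pairCount (fun i j => i ≡ j [MOD p]) n = ∑ i ∈ Finset.range n, n.count (· ≡ i [MOD p]) := by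
  simp only [pairCount, Finset.card_filter, Finset.sum_product, Nat.count_eq_card_filter_range]
  refine Finset.sum_congr rfl fun i _ => Finset.sum_congr rfl fun j _ => ?_
  simp only [Nat.ModEq.comm]

lemma pairCount_modEq_bounds {p : ℕ} (hp : 0 < p) (n : ℕ) :
    n * (n / p) ≤ pairCount (fun i j => i ≡ j [MOD p]) n ∧
      pairCount (fun i j => i ≡ j [MOD p]) n ≤ n * (n / p + 1) := by
  rw [pairCount_modEq]
  constructor
  · calc n * (n / p) = ∑ i ∈ Finset.range n, n / p := by simp
      _ ≤ _ := Finset.sum_le_sum fun i _ => by rw [Nat.count_modEq_card _ hp]; omega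
  · calc _ ≤ ∑ i ∈ Finset.range n, (n / p + 1) :=
          Finset.sum_le_sum fun i _ => by rw [Nat.count_modEq_card _ hp]; split_ifs <;> omega
      _ = n * (n / p + 1) := by simp

lemma abs_pairDensity_modEq_sub_le {p n : ℕ} (hp : 0 < p) (hn : 0 < n) :
    |pairDensity (fun i j => i ≡ j [MOD p]) n - 1 / p| ≤ 1 / n := by
  obtain ⟨hlow, hupp⟩ := pairCount_modEq_bounds hp n
  set C := pairCount (fun i j => i ≡ j [MOD p]) n
  have hp' : (0 : ℝ) < p := by exact_mod_cast hp
  have hn' : (0 : ℝ) < n := by exact_mod_cast hn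
  have hquot_le : ((n / p : ℕ) : ℝ) ≤ n / p := Nat.cast_div_le
  have hlt_quot : (n : ℝ) / p - 1 < (n / p : ℕ) := by
    have h : (n : ℝ) < (n / p : ℕ) * p + p := by exact_mod_cast Nat.lt_div_mul_add hp
    rw [sub_lt_iff_lt_add, div_lt_iff₀ hp']
    linarith
  have hlow' : (n : ℝ) * (n / p : ℕ) ≤ C := by exact_mod_cast hlow
  have hupp' : (C : ℝ) ≤ n * ((n / p : ℕ) + 1) := by exact_mod_cast hupp
  have hcount : |(C : ℝ) - n ^ 2 / p| ≤ n := by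
    have hsq : (n : ℝ) ^ 2 / p = n * (n / p) := by ring
    rw [abs_sub_le_iff, hsq]
    constructor <;> nlinarith
  have hsplit :
      pairDensity (fun i j => i ≡ j [MOD p]) n - 1 / p = (C - n ^ 2 / p) / (n : ℝ) ^ 2 := by
    show (C : ℝ) / (n : ℝ) ^ 2 - 1 / p = _
    field_simp
  calc _ = |(C : ℝ) - n ^ 2 / p| / (n : ℝ) ^ 2 := by rw [hsplit, abs_div, abs_sq]
    _ ≤ n / (n : ℝ) ^ 2 := by gcongr
    _ = 1 / n := by field_simp

lemma tendsto_pairDensity_modEq {p : ℕ} (hp : 0 < p) :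
    Tendsto (pairDensity fun i j => i ≡ j [MOD p]) atTop (nhds (1 / p)) := by
  have hdiff : Tendsto (fun n => pairDensity (fun i j => i ≡ j [MOD p]) n - 1 / p) atTop (nhds 0) :=
    squeeze_zero_norm' ((eventually_gt_atTop 0).mono fun n hn => abs_pairDensity_modEq_sub_le hp hn)
      tendsto_one_div_atTop_nhds_zero_nat
  simpa using hdiff.add_const (1 / (p : ℝ))

section Periodic

variable {α : Type*} {g : α → α} {a : α}

lemma iterate_eq_iterate_iff_modEq (ha : a ∈ periodicPts g) {i j : ℕ} :
    g^[i] a = g^[j] a ↔ i ≡ j [MOD minimalPeriod g a] := by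
  have hpos := minimalPeriod_pos_of_mem_periodicPts ha
  rw [← iterate_mod_minimalPeriod_eq (n := i), ← iterate_mod_minimalPeriod_eq (n := j),
    iterate_eq_iterate_iff_of_lt_minimalPeriod (Nat.mod_lt _ hpos) (Nat.mod_lt _ hpos)]
  rfl

lemma ncard_range_iterate (ha : a ∈ periodicPts g) :
    (range fun n => g^[n] a).ncard = minimalPeriod g a := by
  have hrange : (range fun n => g^[n] a) = (fun n => g^[n] a) '' Iio (minimalPeriod g a) := by
    refine Subset.antisymm ?_ (image_subset_range _ _)
    rintro _ ⟨n, rfl⟩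
    exact ⟨n % minimalPeriod g a, Nat.mod_lt _ (minimalPeriod_pos_of_mem_periodicPts ha),
      iterate_mod_minimalPeriod_eq⟩
  rw [hrange, iterate_injOn_Iio_minimalPeriod.ncard_image, ← Finset.coe_range,
    ncard_coe_finset, Finset.card_range]

end Periodic

variable {X : Type*} [MetricSpace X] {f : X → X} {x y : X}

lemma mapsTo_omegaSet (hf : Continuous f) : MapsTo f (omegaSet f x) (omegaSet f x) := by
  rintro y ⟨φ, hφ, hy⟩
  refine ⟨fun n => φ n + 1, fun a b h => Nat.succ_lt_succ (hφ h), ?_⟩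
  simpa only [iterate_succ_apply', comp_def] using (hf.tendsto y).comp hy

lemma frequently_dist_lt_of_mem_omegaSet (hy : y ∈ omegaSet f x) {δ : ℝ} (hδ : 0 < δ) :
    ∃ᶠ n in atTop, dist (f^[n] x) y < δ := by
  obtain ⟨φ, hφ, hφy⟩ := hy
  exact hφ.tendsto_atTop.frequently (tendsto_nhds.mp hφy δ hδ).frequently

lemma eventually_exists_mem_omegaSet_dist_lt [CompactSpace X] (f : X → X) (x : X) {δ : ℝ}
    (hδ : 0 < δ) : ∀ᶠ n in atTop, ∃ y ∈ omegaSet f x, dist (f^[n] x) y < δ := by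
  by_contra h
  obtain ⟨φ, hφ, hfar⟩ := extraction_of_frequently_atTop (not_eventually.mp h)
  obtain ⟨z, ψ, hψ, hz⟩ := CompactSpace.tendsto_subseq fun k => f^[φ k] x
  obtain ⟨k, hk⟩ := (tendsto_nhds.mp hz δ hδ).exists
  exact hfar (ψ k) ⟨z, ⟨φ ∘ ψ, hφ.comp hψ, hz⟩, hk⟩

lemma exists_shadowing [CompactSpace X] (hf : Continuous f) (hfin : (omegaSet f x).Finite)
    {δ : ℝ} (hδ : 0 < δ) :
    ∃ y ∈ omegaSet f x, ∃ N, ∀ k, dist (f^[N + k] x) (f^[k] y) < δ := by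
  obtain ⟨δ₀, hδ₀, hsep⟩ := hfin.exists_pos_le_dist
  obtain ⟨η, hη, hfη⟩ := Metric.uniformContinuous_iff.mp
    (CompactSpace.uniformContinuous_of_continuous hf) (δ₀ / 2) (by positivity)
  set δ' := min δ (min η (δ₀ / 2))
  have hδ' : 0 < δ' := by positivity
  obtain ⟨N, hN⟩ := eventually_atTop.mp (eventually_exists_mem_omegaSet_dist_lt f x hδ')
  obtain ⟨y, hy, hNy⟩ := hN N le_rfl
  refine ⟨y, hy, N, fun k => ?_⟩
  suffices h : dist (f^[N + k] x) (f^[k] y) < δ' from h.trans_le (min_le_left _ _)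
  induction k with
  | zero => simpa using hNy
  | succ k ih =>
    obtain ⟨z, hz, hNz⟩ := hN (N + (k + 1)) (by omega)
    have hnext : dist (f^[N + (k + 1)] x) (f^[k + 1] y) < δ₀ / 2 := by
      rw [← add_assoc, iterate_succ_apply', iterate_succ_apply']
      exact hfη (ih.trans_le ((min_le_right _ _).trans (min_le_left _ _)))
    -- `z` and `f^[k + 1] y` are points of `ω(x)` within `δ₀ / 2` of `f^[N + (k + 1)] x`
    have hzy : z = f^[k + 1] y := by
      by_contra hne
      have := hsep z hz _ ((mapsTo_omegaSet hf).iterate (k + 1) hy) hne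
      have := dist_triangle_left z (f^[k + 1] y) (f^[N + (k + 1)] x)
      have : δ' ≤ δ₀ / 2 := (min_le_right _ _).trans (min_le_right _ _)
      linarith
    rwa [← hzy]

lemma exists_iterate_eq_of_shadowing (hf : Continuous f) {δ₀ : ℝ}
    (hsep : ∀ y ∈ omegaSet f x, ∀ z ∈ omegaSet f x, y ≠ z → δ₀ ≤ dist y z)
    (hy : y ∈ omegaSet f x) {N : ℕ} (hN : ∀ k, dist (f^[N + k] x) (f^[k] y) < δ₀ / 2)
    {z : X} (hz : z ∈ omegaSet f x) (K : ℕ) : ∃ k ≥ K, f^[k] y = z := by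
  have hδ₀ : 0 < δ₀ / 2 := dist_nonneg.trans_lt (hN 0)
  obtain ⟨n, hnz, hn⟩ := ((frequently_dist_lt_of_mem_omegaSet hz hδ₀).and_eventually
    (eventually_ge_atTop (N + K))).exists
  obtain ⟨k, rfl⟩ := Nat.exists_eq_add_of_le (le_of_add_le_left hn)
  refine ⟨k, by omega, ?_⟩
  by_contra hne
  have := hsep _ ((mapsTo_omegaSet hf).iterate k hy) z hz hne
  have := dist_triangle_left (f^[k] y) z (f^[N + k] x)
  linarith [hN k]

lemma omegaSet_eq_range_iterate_of_shadowing (hf : Continuous f) {δ₀ : ℝ}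
    (hsep : ∀ y ∈ omegaSet f x, ∀ z ∈ omegaSet f x, y ≠ z → δ₀ ≤ dist y z)
    (hy : y ∈ omegaSet f x) {N : ℕ} (hN : ∀ k, dist (f^[N + k] x) (f^[k] y) < δ₀ / 2) :
    y ∈ periodicPts f ∧ omegaSet f x = range fun n => f^[n] y := by
  refine ⟨?_, Subset.antisymm ?_ ?_⟩
  · obtain ⟨k, hk, hky⟩ := exists_iterate_eq_of_shadowing hf hsep hy hN hy 1
    exact ⟨k, hk, hky⟩
  · intro z hz
    obtain ⟨k, -, hkz⟩ := exists_iterate_eq_of_shadowing hf hsep hy hN hz 0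
    exact ⟨k, hkz⟩
  · rintro _ ⟨k, rfl⟩
    exact (mapsTo_omegaSet hf).iterate k hy

lemma dist_iterate_le_iff_of_shadowing {δ δ₀ ε : ℝ}
    (hsep : ∀ a b, f^[a] y ≠ f^[b] y → δ₀ ≤ dist (f^[a] y) (f^[b] y)) {N : ℕ}
    (hN : ∀ k, dist (f^[N + k] x) (f^[k] y) < δ) (hδε : 2 * δ ≤ ε) (hεδ₀ : ε + 2 * δ ≤ δ₀)
    (a b : ℕ) : dist (f^[N + a] x) (f^[N + b] x) ≤ ε ↔ f^[a] y = f^[b] y := by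
  have ha := hN a
  have hb := hN b
  constructor
  · intro hab
    by_contra hne
    linarith [hsep a b hne, dist_triangle4 (f^[a] y) (f^[N + a] x) (f^[N + b] x) (f^[b] y),
      dist_comm (f^[a] y) (f^[N + a] x)]
  · intro hab
    calc dist (f^[N + a] x) (f^[N + b] x)
        ≤ dist (f^[N + a] x) (f^[a] y) + dist (f^[a] y) (f^[N + b] x) := dist_triangle _ _ _
      _ = dist (f^[N + a] x) (f^[a] y) + dist (f^[N + b] x) (f^[b] y) := by
        rw [hab, dist_comm (f^[b] y)]
      _ ≤ ε := by linarith

lemma dist_iterate_le_iff_modEq_of_shadowing (hy : y ∈ periodicPts f) {δ δ₀ ε : ℝ}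
    (hsep : ∀ a b, f^[a] y ≠ f^[b] y → δ₀ ≤ dist (f^[a] y) (f^[b] y)) {N : ℕ}
    (hN : ∀ k, dist (f^[N + k] x) (f^[k] y) < δ) (hδε : 2 * δ ≤ ε) (hεδ₀ : ε + 2 * δ ≤ δ₀)
    (i : ℕ) (hi : i ≥ N) (j : ℕ) (hj : j ≥ N) :
    dist (f^[i] x) (f^[j] x) ≤ ε ↔ i ≡ j [MOD minimalPeriod f y] := by
  obtain ⟨a, rfl⟩ := Nat.exists_eq_add_of_le hi
  obtain ⟨b, rfl⟩ := Nat.exists_eq_add_of_le hj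
  rw [dist_iterate_le_iff_of_shadowing hsep hN hδε hεδ₀, iterate_eq_iterate_iff_modEq hy]
  exact ⟨Nat.ModEq.add_left N, Nat.ModEq.add_left_cancel' N⟩

lemma corrSum_eq_pairDensity (f : X → X) (x : X) (m : ℕ) (ε : ℝ) :
    (fun n => corrSum f x m n ε)
      = pairDensity fun i j => ∀ k < m, dist (f^[i + k] x) (f^[j + k] x) ≤ ε :=
  rfl

lemma forall_lt_add_iff_modEq {R : ℕ → ℕ → Prop} {N p m : ℕ}
    (h : ∀ i ≥ N, ∀ j ≥ N, R i j ↔ i ≡ j [MOD p]) (hm : 0 < m) (i : ℕ) (hi : i ≥ N) (j : ℕ)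
    (hj : j ≥ N) : (∀ k < m, R (i + k) (j + k)) ↔ i ≡ j [MOD p] :=
  ⟨fun hR => (h i hi j hj).mp (hR 0 hm),
    fun hij k _ => (h _ (by omega) _ (by omega)).mpr (hij.add_right k)⟩

end RQA

/-- if the ω-limit set of `x` is finite of cardinality `p`, then for
all sufficiently small `ε > 0` and every `m ≥ 1`, `C_m(x,n,ε) → 1/p` and
`DET_m(x,n,ε) → 1` as `n → ∞`. -/
theorem stmt_4 {X : Type*} [MetricSpace X] [CompactSpace X]
    (f : X → X) (hf : Continuous f) (x : X) (p : ℕ)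
    (hfin : (omegaSet f x).Finite) (hcard : (omegaSet f x).ncard = p) :
    ∃ ε₀ : ℝ, 0 < ε₀ ∧ ∀ ε : ℝ, 0 < ε → ε ≤ ε₀ → ∀ m : ℕ, 0 < m →
      Tendsto (fun n => corrSum f x m n ε) atTop (nhds (1 / (p : ℝ))) ∧
      Tendsto (fun n => detSum f x m n ε) atTop (nhds 1) := by
  obtain ⟨δ₀, hδ₀, hsep⟩ := hfin.exists_pos_le_dist
  refine ⟨δ₀ / 3, by positivity, fun ε hε hεδ₀ m hm => ?_⟩
  obtain ⟨y, hy, N, hN⟩ := exists_shadowing hf hfin (δ := min (ε / 2) (δ₀ / 3)) (by positivity)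
  have hδε := min_le_left (ε / 2) (δ₀ / 3)
  have hδδ₀ := min_le_right (ε / 2) (δ₀ / 3)
  obtain ⟨hper, hω⟩ := omegaSet_eq_range_iterate_of_shadowing hf hsep hy
    fun k => (hN k).trans_le (by linarith)
  have hp : Function.minimalPeriod f y = p := by rw [← hcard, hω, ncard_range_iterate hper]
  have hp0 : 0 < p := hp ▸ Function.minimalPeriod_pos_of_mem_periodicPts hper
  have horbit : ∀ a b, f^[a] y ≠ f^[b] y → δ₀ ≤ dist (f^[a] y) (f^[b] y) := fun a b =>
    hsep _ ((mapsTo_omegaSet hf).iterate a hy) _ ((mapsTo_omegaSet hf).iterate b hy)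
  have hrec := dist_iterate_le_iff_modEq_of_shadowing (ε := ε) hper horbit hN (by linarith)
    (by linarith)
  rw [hp] at hrec
  have hC : ∀ m, 0 < m → Tendsto (fun n => corrSum f x m n ε) atTop (nhds (1 / (p : ℝ))) :=
    fun m hm => (corrSum_eq_pairDensity f x m ε).symm ▸
      tendsto_pairDensity_congr (forall_lt_add_iff_modEq hrec hm) (tendsto_pairDensity_modEq hp0)
  have hp' : (1 : ℝ) / p ≠ 0 := by positivity
  refine ⟨hC m hm, ?_⟩
  have hdet := (hC m hm).div (hC 1 one_pos) hp'
  rw [div_self hp'] at hdet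
  exact hdet
end

section
/- Let (X,f) be a dynamical system, x ∈ X with finite ω-limit set ω_f(x) = {y_0,…,y_{p−1}} a periodic orbit with f(y_k) = y_{(k+1) mod p}. Suppose ε > 0 is such that ρ(y_k, y_l) ≥ 2ε for all k ≠ l, and suppose ρ(f^i(x), y_{i mod p}) < ε/2 for all i ≥ 0. Then for all i, j ≥ 0 and every positive integer m: ρ_m(f^i(x), f^j(x)) ≤ ε if and only if i ≡ j (mod p). -/
open Filter Metric Set
open scoped Classical

open RQA

/-- for `x` attracted to a `p`-cycle `{y_0,…,y_{p-1}} = ω_f(x)`,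
if the cycle points are `2ε`-separated and the trajectory `ε/2`-shadows the
cycle, then `ρ_m(f^i(x), f^j(x)) ≤ ε ↔ i ≡ j (mod p)`. -/
theorem stmt_5 {X : Type*} [MetricSpace X] [CompactSpace X]
    (f : X → X) (hf : Continuous f) (x : X) (p : ℕ) (hp : 0 < p) (y : ℕ → X)
    (homega : omegaSet f x = {w | ∃ k < p, w = y k})
    (hper : ∀ k : ℕ, f (y k) = y ((k + 1) % p))
    (ε : ℝ) (hε : 0 < ε)
    (hsep : ∀ k l : ℕ, k < p → l < p → k ≠ l → 2 * ε ≤ dist (y k) (y l))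
    (happrox : ∀ i : ℕ, dist (f^[i] x) (y (i % p)) < ε / 2) :
    ∀ i j m : ℕ, 0 < m →
      ((∀ k < m, dist (f^[i + k] x) (f^[j + k] x) ≤ ε) ↔ i % p = j % p) := by
  intro i j m hm
  constructor
  · intro h
    by_contra hne
    have h0 := h 0 hm
    simp only [Nat.add_zero] at h0
    have hd := hsep (i % p) (j % p) (Nat.mod_lt _ hp) (Nat.mod_lt _ hp) hne
    have ht := dist_triangle4 (y (i % p)) (f^[i] x) (f^[j] x) (y (j % p))
    have h1 := happrox i
    have h2 := happrox j
    rw [dist_comm] at h1 h2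
    rw [dist_comm (f^[j] x)] at ht
    linarith
  · intro hmod k _
    have heq : (i + k) % p = (j + k) % p := by
      rw [Nat.add_mod, hmod, ← Nat.add_mod]
    have h1 := happrox (i + k)
    have h2 := happrox (j + k)
    rw [heq] at h1
    have ht := dist_triangle (f^[i + k] x) (y ((j + k) % p)) (f^[j + k] x)
    rw [dist_comm (y ((j + k) % p))] at ht
    linarith
end

section
/- Let s ≥ 0 and t ≥ s + 2 be integers, let a ∈ {0,1}^s and b ∈ {0,1}^t extend a (i.e. the first s letters of b are a). Let h be an odd multiple of 2^s. Identify words in {0,1}^t with elements of ℤ/2^tℤ via the 2-adic encoding (addition with carry from left to right, i.e. the word w represents Σ_{i<t} w_i·2^i). Then for every u, v ∈ {0,1} there exists a unique integer i ∈ {0,1,2,3} such that either (b + i·2^s has first s+2 letters a0u and b + h + i·2^s has first s+2 letters a1v) or (b + i·2^s has first s+2 letters a1v and b + h + i·2^s has first s+2 letters a0u). -/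
open Filter Metric Set
open scoped Classical

open RQA

/-!
Write `encodeWord b = A + 2^s M` with `A = encodeWord a < 2^s`. Reducing modulo `2^(s+2)`, all four
conditions only see the residues of `M + i` and `M + j + i` modulo 4, and the targets `a0u`, `a1v`
contribute an even and an odd residue. Since `j` is odd, exactly one of `M + i`, `M + j + i` is
even, and `j mod 4` decides which of the two orderings is attainable; in it the shift `i` is
pinned down by a single congruence modulo 4.
-/

namespace RQA

theorem encodeWord_castSucc {t : ℕ} (w : Fin (t + 1) → Bool) :
    encodeWord w =
      encodeWord (fun i : Fin t => w i.castSucc) + if w (Fin.last t) then 2 ^ t else 0 :=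
  Fin.sum_univ_castSucc _

theorem encodeWord_lt {t : ℕ} (w : Fin t → Bool) : encodeWord w < 2 ^ t := by
  induction t with
  | zero => simp [encodeWord]
  | succ t ih =>
    have := ih fun i => w i.castSucc
    rw [encodeWord_castSucc, pow_succ]
    split <;> omega

theorem encodeWord_mod_two_pow {s t : ℕ} (hst : s ≤ t) (w : Fin t → Bool) :
    encodeWord w % 2 ^ s = encodeWord (fun i : Fin s => w (Fin.castLE hst i)) := by
  induction t, hst using Nat.le_induction with
  | base => simp only [Fin.castLE_refl]; exact Nat.mod_eq_of_lt (encodeWord_lt w)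
  | succ t hst ih =>
    obtain ⟨k, hk⟩ : 2 ^ s ∣ if w (Fin.last t) then 2 ^ t else 0 := by
      split
      · exact pow_dvd_pow 2 hst
      · exact dvd_zero _
    rw [encodeWord_castSucc, hk, Nat.add_mul_mod_self_left, ih]
    rfl

end RQA

theorem Nat.add_mul_mod_mul_eq_iff {A c x n y : ℕ} (hA : A < c) :
    (A + c * x) % (c * n) = A + c * y ↔ x % n = y := by
  rw [Nat.mod_mul, Nat.add_mul_mod_self_left, Nat.mod_eq_of_lt hA,
    Nat.add_mul_div_left _ _ (by omega), Nat.div_eq_of_lt hA, zero_add, add_right_inj,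
    Nat.mul_left_cancel_iff (by omega)]

theorem Nat.existsUnique_add_mod_four {m j p q : ℕ} (hj : Odd j) (hp : Even p) (hq : Odd q)
    (hp4 : p < 4) (hq4 : q < 4) :
    ∃! i : ℕ, i < 4 ∧ (((m + i) % 4 = p ∧ (m + j + i) % 4 = q) ∨
      ((m + i) % 4 = q ∧ (m + j + i) % 4 = p)) := by
  obtain ⟨j, rfl⟩ := hj
  obtain ⟨p, rfl⟩ := hp
  obtain ⟨q, rfl⟩ := hq
  by_cases hjpq : (2 * j + 1 + (p + p)) % 4 = 2 * q + 1
  · exact ⟨(p + p + 4 - m % 4) % 4, by omega, fun i hi => by omega⟩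
  · exact ⟨(2 * q + 1 + 4 - m % 4) % 4, by omega, fun i hi => by omega⟩

/-- Taking the first `s+2` letters corresponds to reducing mod `2^(s+2)`, and the word `a0u`
(resp. `a1v`) has encoded value `encodeWord a + u·2^(s+1)` (resp. `encodeWord a + 2^s + v·2^(s+1)`). -/
theorem stmt_6 (s t : ℕ) (hst : s + 2 ≤ t) (a : Fin s → Bool) (b : Fin t → Bool)
    (hext : ∀ i : Fin s, b (Fin.castLE (by omega) i) = a i)
    (h j : ℕ) (hj : Odd j) (hh : h = j * 2 ^ s) (u v : Bool) :
    ∃! i : ℕ, i < 4 ∧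
      (((encodeWord b + i * 2 ^ s) % 2 ^ (s + 2)
            = encodeWord a + (if u then 2 ^ (s + 1) else 0) ∧
        (encodeWord b + h + i * 2 ^ s) % 2 ^ (s + 2)
            = encodeWord a + 2 ^ s + (if v then 2 ^ (s + 1) else 0)) ∨
       ((encodeWord b + i * 2 ^ s) % 2 ^ (s + 2)
            = encodeWord a + 2 ^ s + (if v then 2 ^ (s + 1) else 0) ∧
        (encodeWord b + h + i * 2 ^ s) % 2 ^ (s + 2)
            = encodeWord a + (if u then 2 ^ (s + 1) else 0))) := by
  subst hh
  set A := encodeWord a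
  have hA : A < 2 ^ s := encodeWord_lt a
  obtain ⟨M, hb⟩ : ∃ M, encodeWord b = A + 2 ^ s * M :=
    ⟨_, by
      rw [← Nat.mod_add_div (encodeWord b) (2 ^ s), encodeWord_mod_two_pow (by omega), funext hext]⟩
  have h0u : A + (if u then 2 ^ (s + 1) else 0) = A + 2 ^ s * (if u then 2 else 0) := by
    split <;> ring
  have h1v : A + 2 ^ s + (if v then 2 ^ (s + 1) else 0) = A + 2 ^ s * (if v then 3 else 1) := by
    split <;> ring
  refine (existsUnique_congr fun i => ?_).mpr (Nat.existsUnique_add_mod_four (m := M) hj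
    (p := if u then 2 else 0) (q := if v then 3 else 1) (by split <;> decide) (by split <;> decide)
    (by split <;> omega) (by split <;> omega))
  rw [show encodeWord b + i * 2 ^ s = A + 2 ^ s * (M + i) by rw [hb]; ring,
    show encodeWord b + j * 2 ^ s + i * 2 ^ s = A + 2 ^ s * (M + j + i) by rw [hb]; ring,
    h0u, h1v, pow_add]
  simp only [Nat.add_mul_mod_mul_eq_iff hA]
  rfl
end

section
/- Let ε > 0 and let {K_a : a ∈ {0,1}^t, t ≥ 0} be a family of nondegenerate closed subintervals of [0,1] such that for every word a and every extension b of a, K_b ⊆ K_a, and the intervals K_a for a of fixed length t are pairwise disjoint. Let L_t(ε) = {a ∈ {0,1}^t : diam(K_a) ≥ ε} and λ_t(ε) = Σ_{a ∈ L_t(ε)} diam(K_a). If for some t the restriction map φ_t : L_{t+1}(ε) → L_t(ε), φ_t(a) = a restricted to its first t letters, is not surjective, then λ_{t+1}(ε) ≤ λ_t(ε) − ε. -/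
open Filter Metric Set
open scoped Classical

open RQA

/-- if the prefix map `L_{t+1}(ε) → L_t(ε)` is not surjective, then
`λ_{t+1}(ε) ≤ λ_t(ε) − ε`. -/
theorem stmt_9 (ε : ℝ) (hε : 0 < ε) (K : ∀ t : ℕ, (Fin t → Bool) → Set ℝ)
    (hK : ∀ t (a : Fin t → Bool), ∃ y z : ℝ, y < z ∧ 0 ≤ y ∧ z ≤ 1 ∧ K t a = Icc y z)
    (hnest : ∀ (s t : ℕ) (hst : s ≤ t) (b : Fin t → Bool),
      K t b ⊆ K s (fun i => b (Fin.castLE hst i)))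
    (hdisj : ∀ t (a b : Fin t → Bool), a ≠ b → Disjoint (K t a) (K t b))
    (t : ℕ)
    (hnotsurj : ∃ a ∈ Finset.univ.filter (fun a : Fin t → Bool => ε ≤ Metric.diam (K t a)),
      ∀ b ∈ Finset.univ.filter (fun b : Fin (t + 1) → Bool => ε ≤ Metric.diam (K (t + 1) b)),
        (fun i : Fin t => b (Fin.castSucc i)) ≠ a) :
    ∑ b ∈ Finset.univ.filter (fun b : Fin (t + 1) → Bool => ε ≤ Metric.diam (K (t + 1) b)),
        Metric.diam (K (t + 1) b)
      ≤ (∑ a ∈ Finset.univ.filter (fun a : Fin t → Bool => ε ≤ Metric.diam (K t a)),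
          Metric.diam (K t a)) - ε := by
  classical
  obtain ⟨a₀, ha₀, hmiss⟩ := hnotsurj
  set p : (Fin (t+1) → Bool) → (Fin t → Bool) := fun b i => b (Fin.castSucc i) with hp
  set Lt1 := Finset.univ.filter (fun b : Fin (t + 1) → Bool => ε ≤ Metric.diam (K (t + 1) b))
    with hLt1
  set Lt := Finset.univ.filter (fun a : Fin t → Bool => ε ≤ Metric.diam (K t a)) with hLt
  have hbdd : ∀ s (a : Fin s → Bool), Bornology.IsBounded (K s a) := by
    intro s a
    obtain ⟨y, z, _, _, _, hK'⟩ := hK s a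
    rw [hK']
    exact isBounded_Icc y z
  have hsub : ∀ b : Fin (t+1) → Bool, K (t+1) b ⊆ K t (p b) := by
    intro b
    have h := hnest t (t+1) (Nat.le_succ t) b
    have : (fun i : Fin t => b (Fin.castLE (Nat.le_succ t) i)) = p b := by
      funext i; rfl
    rwa [this] at h
  -- the two-interval geometric lemma
  have key : ∀ (a : Fin t → Bool) (b0 b1 : Fin (t+1) → Bool), b0 ≠ b1 →
      K (t+1) b0 ⊆ K t a → K (t+1) b1 ⊆ K t a →
      Metric.diam (K (t+1) b0) + Metric.diam (K (t+1) b1) ≤ Metric.diam (K t a) := by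
    intro a b0 b1 hne hs0 hs1
    obtain ⟨y, z, hyz, _, _, hKa⟩ := hK t a
    obtain ⟨y0, z0, hyz0, _, _, hK0⟩ := hK (t+1) b0
    obtain ⟨y1, z1, hyz1, _, _, hK1⟩ := hK (t+1) b1
    rw [hKa] at hs0 hs1
    rw [hK0] at hs0 ⊢
    rw [hK1] at hs1 ⊢
    rw [hKa, Real.diam_Icc hyz.le, Real.diam_Icc hyz0.le, Real.diam_Icc hyz1.le]
    have h0 := (Set.Icc_subset_Icc_iff hyz0.le).mp hs0
    have h1 := (Set.Icc_subset_Icc_iff hyz1.le).mp hs1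
    have hd := hdisj (t+1) b0 b1 hne
    rw [hK0, hK1] at hd
    have hsep : z0 < y1 ∨ z1 < y0 := by
      by_contra hcon
      push_neg at hcon
      obtain ⟨hc0, hc1⟩ := hcon
      have : max y0 y1 ∈ Icc y0 z0 ∩ Icc y1 z1 := by
        constructor
        · exact ⟨le_max_left _ _, max_le hyz0.le hc0⟩
        · exact ⟨le_max_right _ _, max_le hc1 hyz1.le⟩
      exact (hd.le_bot this).elim
    rcases hsep with h | h
    · linarith [h0.1, h0.2, h1.1, h1.2]
    · linarith [h0.1, h0.2, h1.1, h1.2]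
  have himg : Lt1.image p ⊆ Lt.erase a₀ := by
    intro a ha
    obtain ⟨b, hb, rfl⟩ := Finset.mem_image.mp ha
    refine Finset.mem_erase.mpr ⟨hmiss b hb, ?_⟩
    have hbε : ε ≤ Metric.diam (K (t+1) b) := (Finset.mem_filter.mp hb).2
    exact Finset.mem_filter.mpr ⟨Finset.mem_univ _,
      hbε.trans (Metric.diam_mono (hsub b) (hbdd _ _))⟩
  have hfib : ∀ a ∈ Lt1.image p,
      ∑ b ∈ Lt1.filter (fun b => p b = a), Metric.diam (K (t+1) b)
        ≤ Metric.diam (K t a) := by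
    intro a _
    set b0 : Fin (t+1) → Bool := Fin.snoc a false with hb0
    set b1 : Fin (t+1) → Bool := Fin.snoc a true with hb1
    have hne : b0 ≠ b1 := by
      intro h
      have := congrFun h (Fin.last t)
      simp [hb0, hb1, Fin.snoc_last] at this
    have hF : Lt1.filter (fun b => p b = a) ⊆ ({b0, b1} : Finset _) := by
      intro b hb
      have hpb : p b = a := (Finset.mem_filter.mp hb).2
      have hbe : b = Fin.snoc a (b (Fin.last t)) := by
        funext i
        refine Fin.lastCases ?_ ?_ i
        · simp [Fin.snoc_last]
        · intro j
          rw [Fin.snoc_castSucc]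
          exact congrFun hpb j
      rcases Bool.eq_false_or_eq_true (b (Fin.last t)) with h | h <;>
        rw [h] at hbe <;> simp [hbe, hb0, hb1]
    have hnn : ∀ b ∈ ({b0, b1} : Finset (Fin (t+1) → Bool)),
        b ∉ Lt1.filter (fun b => p b = a) → 0 ≤ Metric.diam (K (t+1) b) :=
      fun b _ _ => Metric.diam_nonneg
    calc ∑ b ∈ Lt1.filter (fun b => p b = a), Metric.diam (K (t+1) b)
        ≤ ∑ b ∈ ({b0, b1} : Finset _), Metric.diam (K (t+1) b) :=
          Finset.sum_le_sum_of_subset_of_nonneg hF hnn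
      _ = Metric.diam (K (t+1) b0) + Metric.diam (K (t+1) b1) := by
          rw [Finset.sum_pair hne]
      _ ≤ Metric.diam (K t a) := by
          refine key a b0 b1 hne ?_ ?_
          · have : p b0 = a := by funext i; simp [hp, hb0, Fin.snoc_castSucc]
            rw [← this]; exact hsub b0
          · have : p b1 = a := by funext i; simp [hp, hb1, Fin.snoc_castSucc]
            rw [← this]; exact hsub b1
  have hsplit : ∑ b ∈ Lt1, Metric.diam (K (t+1) b)
      = ∑ a ∈ Lt1.image p, ∑ b ∈ Lt1.filter (fun b => p b = a), Metric.diam (K (t+1) b) :=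
    (Finset.sum_fiberwise_of_maps_to (fun b hb => Finset.mem_image_of_mem p hb) _).symm
  have ha₀' : a₀ ∈ Lt := ha₀
  have ha₀ε : ε ≤ Metric.diam (K t a₀) := (Finset.mem_filter.mp ha₀').2
  calc ∑ b ∈ Lt1, Metric.diam (K (t+1) b)
      = ∑ a ∈ Lt1.image p, ∑ b ∈ Lt1.filter (fun b => p b = a), Metric.diam (K (t+1) b) :=
        hsplit
    _ ≤ ∑ a ∈ Lt1.image p, Metric.diam (K t a) := Finset.sum_le_sum hfib
    _ ≤ ∑ a ∈ Lt.erase a₀, Metric.diam (K t a) :=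
        Finset.sum_le_sum_of_subset_of_nonneg himg (fun a _ _ => Metric.diam_nonneg)
    _ = (∑ a ∈ Lt, Metric.diam (K t a)) - Metric.diam (K t a₀) :=
        Finset.sum_erase_eq_sub ha₀'
    _ ≤ (∑ a ∈ Lt, Metric.diam (K t a)) - ε := by linarith
end

section
/- Let ε > 0 and let {K_a : a ∈ {0,1}^t, t ≥ 0} be a family of pairwise disjoint (at each level) nondegenerate closed subintervals of [0,1], nested so that K_b ⊆ K_a whenever b extends a. Define ℓ_t(ε) = card{a ∈ {0,1}^t : diam(K_a) ≥ ε} and ℓ_∞(ε) = card{α ∈ {0,1}^ℕ : diam(∩_t K_{α[0,t)}) ≥ ε}. Then there exists t₀ such that ℓ_t(ε) = ℓ_∞(ε) for all t ≥ t₀. -/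
open Filter Metric Set
open scoped Classical

open RQA

/-!
A word `a` is *heavy* if `diam K_a ≥ ε`; prefixes of heavy words are heavy, and a branch `α` has
`diam K_α ≥ ε` iff all its prefixes are heavy (nested intervals). At each level there are at most
`1/ε` heavy words, so there are at most `1/ε` heavy branches, and for large `t` distinct heavy
branches have distinct prefixes of length `t`. It remains to see that eventually every heavy word
is the prefix of a heavy branch. By compactness of `{0,1}^ℕ` it suffices that a heavy word `a` of
length `t` has heavy extensions of every length `s ≥ t`. If it has none at length `s`, then `K_a`
lies in the union `U_t` of the heavy intervals of level `t` but not in `U_s`, so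
`vol U_t - vol U_s ≥ ε`; as `vol U_t` is non-increasing, this is impossible once `vol U_t` is
within `ε` of its limit.
-/

open MeasureTheory

section Sequences

variable {β : Type*}

theorem eventually_injOn_restrict (S : Finset (ℕ → β)) :
    ∀ᶠ t in atTop, InjOn (fun (α : ℕ → β) (i : Fin t) => α i) S := by
  have hsep : ∀ α ∈ S, ∀ γ ∈ S,
      ∀ᶠ t in atTop, (fun i : Fin t => α i) = (fun i : Fin t => γ i) → α = γ := by
    intro α _ γ _
    by_cases hαγ : α = γ
    · exact Eventually.of_forall fun _ _ => hαγ
    obtain ⟨n, hn⟩ := Function.ne_iff.mp hαγ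
    filter_upwards [eventually_gt_atTop n] with t ht heq
    exact absurd (congrFun heq ⟨n, ht⟩) hn
  filter_upwards [(eventually_all_finset S).2 fun α hα => (eventually_all_finset S).2 (hsep α hα)]
    with t ht α hα γ hγ
  exact ht α hα γ hγ

theorem finite_of_forall_restrict_mem {A : Set (ℕ → β)} (H : ∀ t, Finset (Fin t → β)) {N : ℕ}
    (hcard : ∀ t, (H t).card ≤ N) (hA : ∀ α ∈ A, ∀ t, (fun i : Fin t => α i) ∈ H t) :
    A.Finite := by
  by_contra hinf
  obtain ⟨S, hSA, hS⟩ := Set.Infinite.exists_subset_card_eq hinf (N + 1)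
  obtain ⟨t, ht⟩ := (eventually_injOn_restrict S).exists
  have hle := Finset.card_le_card_of_injOn _ (fun α hα => hA α (hSA hα) t) ht
  have := hcard t
  omega

/-- König's lemma for a finitely branching tree of words, via compactness of `β^ℕ`. -/
theorem exists_restrict_eq_of_forall_extension [TopologicalSpace β] [DiscreteTopology β]
    [Finite β] [Nonempty β] (T : ∀ t, Set (Fin t → β))
    (hT : ∀ s t (hst : s ≤ t) (b : Fin t → β), b ∈ T t → Fin.take s hst b ∈ T s)
    {t : ℕ} {a : Fin t → β} (ha : ∀ s (hts : t ≤ s), ∃ b ∈ T s, Fin.take t hts b = a) :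
    ∃ α : ℕ → β, (∀ s, (fun i : Fin s => α i) ∈ T s) ∧ (fun i : Fin t => α i) = a := by
  have hcont : ∀ s, Continuous fun (α : ℕ → β) (i : Fin s) => α i :=
    fun s => continuous_pi fun i => continuous_apply _
  let C : ℕ → Set (ℕ → β) := fun n =>
    (fun α (i : Fin (t + n)) => α i) ⁻¹' T (t + n) ∩ (fun α (i : Fin t) => α i) ⁻¹' {a}
  have hC_succ : ∀ n, C (n + 1) ⊆ C n := fun n α ⟨hα, hαa⟩ => ⟨hT _ _ (by omega) _ hα, hαa⟩
  have hC_nonempty : ∀ n, (C n).Nonempty := by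
    intro n
    obtain ⟨b, hb, rfl⟩ := ha (t + n) (Nat.le_add_right t n)
    refine ⟨fun i => if h : i < t + n then b ⟨i, h⟩ else Classical.arbitrary β, ?_, ?_⟩
    · simpa using hb
    · funext i
      exact dif_pos (by omega)
  have hC_closed : ∀ n, IsClosed (C n) := fun n =>
    ((isClosed_discrete _).preimage (hcont _)).inter ((isClosed_discrete _).preimage (hcont _))
  obtain ⟨α, hα⟩ := IsCompact.nonempty_iInter_of_sequence_nonempty_isCompact_isClosed C hC_succ
    hC_nonempty (hC_closed 0).isCompact hC_closed
  rw [mem_iInter] at hα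
  exact ⟨α, fun s => hT s (t + s) (by omega) _ (hα s).1, (hα 0).2⟩

end Sequences

theorem le_diam_iInter_Icc {y z : ℕ → ℝ} {ε : ℝ} (hε : 0 < ε)
    (hanti : Antitone fun n => Icc (y n) (z n)) (hlen : ∀ n, ε ≤ diam (Icc (y n) (z n))) :
    ε ≤ diam (⋂ n, Icc (y n) (z n)) := by
  have hyz : ∀ n, y n ≤ z n := fun n => by
    by_contra h
    have := hlen n
    rw [Icc_eq_empty h, diam_empty] at this
    linarith
  have hle : ∀ {m n}, m ≤ n → y m ≤ y n ∧ z n ≤ z m :=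
    fun h => (Icc_subset_Icc_iff (hyz _)).1 (hanti h)
  have hy_le : ∀ m n, y m ≤ z n - ε := fun m n => by
    have := hlen (max m n)
    rw [Real.diam_Icc (hyz _)] at this
    linarith [(hle (le_max_left m n)).1, (hle (le_max_right m n)).2]
  have hbdd : BddAbove (range y) := ⟨z 0 - ε, forall_mem_range.2 fun m => hy_le m 0⟩
  set Y := ⨆ m, y m
  have hY : ∀ n, y n ≤ Y ∧ Y + ε ≤ z n :=
    fun n => ⟨le_ciSup hbdd n, by linarith [ciSup_le fun m => hy_le m n]⟩
  have hmem : ∀ x, (∀ n, y n ≤ x ∧ x ≤ z n) → x ∈ ⋂ n, Icc (y n) (z n) := fun x hx =>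
    mem_iInter.2 hx
  calc ε = dist Y (Y + ε) := by simp [abs_of_pos hε]
    _ ≤ _ := dist_le_diam_of_mem ((isBounded_Icc (y 0) (z 0)).subset (iInter_subset _ 0))
      (hmem Y fun n => ⟨(hY n).1, by linarith [(hY n).2]⟩)
      (hmem (Y + ε) fun n => ⟨by linarith [(hY n).1], (hY n).2⟩)

theorem ofReal_diam_le_volume_Icc (y z : ℝ) :
    ENNReal.ofReal (diam (Icc y z)) ≤ volume (Icc y z) := by
  rw [Real.volume_Icc, ← Real.ediam_Icc]
  exact ENNReal.ofReal_toReal_le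

theorem eventually_measure_sdiff_lt {Ω : Type*} [MeasurableSpace Ω] {μ : Measure Ω}
    {U : ℕ → Set Ω} (hU : Antitone U) (hmeas : ∀ n, NullMeasurableSet (U n) μ)
    (hfin : μ (U 0) ≠ ⊤) {δ : ENNReal} (hδ : 0 < δ) :
    ∀ᶠ t in atTop, ∀ s ≥ t, μ (U t \ U s) < δ := by
  set L := ⨅ n, μ (U n)
  have hL : L < L + δ := ENNReal.lt_add_right (ne_top_of_le_ne_top hfin (iInf_le _ 0)) hδ.ne'
  have hconv := tendsto_atTop_iInf fun m n (h : m ≤ n) => measure_mono (μ := μ) (hU h)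
  filter_upwards [hconv.eventually (gt_mem_nhds hL)] with t ht s hst
  refine measure_sdiff_lt_of_lt_add (hmeas s) (hU hst)
    (ne_top_of_le_ne_top hfin (measure_mono (hU (Nat.zero_le s)))) ?_
  calc μ (U t) < L + δ := ht
    _ ≤ μ (U s) + δ := by gcongr; exact iInf_le _ s

section IntervalTree

variable {K : ∀ t : ℕ, (Fin t → Bool) → Set ℝ} {ε : ℝ}

noncomputable def heavyWords (K : ∀ t : ℕ, (Fin t → Bool) → Set ℝ) (ε : ℝ) (t : ℕ) :
    Finset (Fin t → Bool) :=
  {a | ε ≤ diam (K t a)}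

def heavyUnion (K : ∀ t : ℕ, (Fin t → Bool) → Set ℝ) (ε : ℝ) (t : ℕ) : Set ℝ :=
  ⋃ a ∈ heavyWords K ε t, K t a

def heavyBranches (K : ∀ t : ℕ, (Fin t → Bool) → Set ℝ) (ε : ℝ) : Set (ℕ → Bool) :=
  {α | ε ≤ diam (⋂ t, K t (fun i : Fin t => α i))}

@[simp]
theorem mem_heavyWords {t : ℕ} {a : Fin t → Bool} : a ∈ heavyWords K ε t ↔ ε ≤ diam (K t a) := by
  simp [heavyWords]

theorem take_mem_heavyWords (hK : ∀ t a, ∃ y z : ℝ, K t a = Icc y z)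
    (hnest : ∀ s t (hst : s ≤ t) (b : Fin t → Bool), K t b ⊆ K s (Fin.take s hst b))
    {s t : ℕ} (hst : s ≤ t) {b : Fin t → Bool} (hb : b ∈ heavyWords K ε t) :
    Fin.take s hst b ∈ heavyWords K ε s := by
  obtain ⟨y, z, hyz⟩ := hK s (Fin.take s hst b)
  rw [mem_heavyWords] at hb ⊢
  exact hb.trans (diam_mono (hnest s t hst b) (hyz ▸ isBounded_Icc y z))

theorem mem_heavyBranches_iff (hK : ∀ t a, ∃ y z : ℝ, K t a = Icc y z)
    (hnest : ∀ s t (hst : s ≤ t) (b : Fin t → Bool), K t b ⊆ K s (Fin.take s hst b))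
    (hε : 0 < ε) {α : ℕ → Bool} :
    α ∈ heavyBranches K ε ↔ ∀ t, (fun i : Fin t => α i) ∈ heavyWords K ε t := by
  choose y z hyz using fun t => hK t (fun i : Fin t => α i)
  have hanti : Antitone fun t => Icc (y t) (z t) := fun m n hmn => by
    show Icc _ _ ⊆ Icc _ _
    rw [← hyz m, ← hyz n]
    exact hnest m n hmn _
  show ε ≤ diam (⋂ t, K t _) ↔ _
  simp only [mem_heavyWords, hyz]
  exact ⟨fun h t => h.trans (diam_mono (iInter_subset _ t) (isBounded_Icc _ _)),
    le_diam_iInter_Icc hε hanti⟩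

theorem measurableSet_heavyUnion (hK : ∀ t a, ∃ y z : ℝ, K t a = Icc y z) (t : ℕ) :
    MeasurableSet (heavyUnion K ε t) :=
  Finset.measurableSet_biUnion _ fun a _ => by
    obtain ⟨y, z, hyz⟩ := hK t a
    exact hyz ▸ measurableSet_Icc

theorem ofReal_le_volume_of_mem_heavyWords (hK : ∀ t a, ∃ y z : ℝ, K t a = Icc y z) {t : ℕ}
    {a : Fin t → Bool} (ha : a ∈ heavyWords K ε t) : ENNReal.ofReal ε ≤ volume (K t a) := by
  obtain ⟨y, z, hyz⟩ := hK t a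
  rw [mem_heavyWords, hyz] at ha
  exact (ENNReal.ofReal_le_ofReal ha).trans (hyz ▸ ofReal_diam_le_volume_Icc y z)

theorem volume_heavyUnion_le_one (h01 : ∀ t a, K t a ⊆ Icc 0 1) (t : ℕ) :
    volume (heavyUnion K ε t) ≤ 1 :=
  calc volume (heavyUnion K ε t) ≤ volume (Icc (0 : ℝ) 1) :=
        measure_mono (iUnion₂_subset fun a _ => h01 t a)
    _ = 1 := by simp

theorem card_heavyWords_le (hK : ∀ t a, ∃ y z : ℝ, K t a = Icc y z)
    (h01 : ∀ t a, K t a ⊆ Icc 0 1)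
    (hdisj : ∀ t (a b : Fin t → Bool), a ≠ b → Disjoint (K t a) (K t b))
    (hε : 0 < ε) (t : ℕ) : (heavyWords K ε t).card ≤ ⌊1 / ε⌋₊ := by
  have hvol : ENNReal.ofReal ((heavyWords K ε t).card * ε) ≤ 1 :=
    calc ENNReal.ofReal ((heavyWords K ε t).card * ε)
        = ∑ _a ∈ heavyWords K ε t, ENNReal.ofReal ε := by
          rw [Finset.sum_const, nsmul_eq_mul, ENNReal.ofReal_mul (Nat.cast_nonneg _),
            ENNReal.ofReal_natCast]
      _ ≤ ∑ a ∈ heavyWords K ε t, volume (K t a) :=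
          Finset.sum_le_sum fun a ha => ofReal_le_volume_of_mem_heavyWords hK ha
      _ = volume (heavyUnion K ε t) := by
          refine (measure_biUnion_finset (fun a _ b _ hab => hdisj t a b hab) fun a _ => ?_).symm
          obtain ⟨y, z, hyz⟩ := hK t a
          exact hyz ▸ measurableSet_Icc
      _ ≤ 1 := volume_heavyUnion_le_one h01 t
  exact Nat.le_floor ((le_div_iff₀ hε).2 (by simpa using ENNReal.ofReal_le_one.1 hvol))

theorem antitone_heavyUnion (hK : ∀ t a, ∃ y z : ℝ, K t a = Icc y z)
    (hnest : ∀ s t (hst : s ≤ t) (b : Fin t → Bool), K t b ⊆ K s (Fin.take s hst b)) :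
    Antitone (heavyUnion K ε) := fun s t hst =>
  iUnion₂_subset fun b hb =>
    (hnest s t hst b).trans (subset_biUnion_of_mem (take_mem_heavyWords hK hnest hst hb))

theorem eventually_forall_heavyWords_extend (hK : ∀ t a, ∃ y z : ℝ, K t a = Icc y z)
    (h01 : ∀ t a, K t a ⊆ Icc 0 1)
    (hnest : ∀ s t (hst : s ≤ t) (b : Fin t → Bool), K t b ⊆ K s (Fin.take s hst b))
    (hdisj : ∀ t (a b : Fin t → Bool), a ≠ b → Disjoint (K t a) (K t b)) (hε : 0 < ε) :
    ∀ᶠ t in atTop, ∀ a ∈ heavyWords K ε t, ∀ s (hts : t ≤ s),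
      ∃ b ∈ heavyWords K ε s, Fin.take t hts b = a := by
  filter_upwards [eventually_measure_sdiff_lt (antitone_heavyUnion hK hnest)
    (fun t => (measurableSet_heavyUnion hK t).nullMeasurableSet)
    (ne_top_of_le_ne_top ENNReal.one_ne_top (volume_heavyUnion_le_one h01 0))
    (ENNReal.ofReal_pos.2 hε)] with t ht a ha s hts
  by_contra! hno
  have hKa : K t a ⊆ heavyUnion K ε t \ heavyUnion K ε s := by
    refine subset_sdiff.2 ⟨subset_biUnion_of_mem ha, disjoint_iUnion₂_right.2 fun b hb => ?_⟩
    exact (hdisj t a _ (hno b hb).symm).mono_right (hnest t s hts b)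
  exact (ht s hts).not_ge ((ofReal_le_volume_of_mem_heavyWords hK ha).trans (measure_mono hKa))

end IntervalTree

/-- `ℓ_t(ε)` is eventually constant, equal to `ℓ_∞(ε)`. -/
theorem stmt_10 (ε : ℝ) (hε : 0 < ε) (K : ∀ t : ℕ, (Fin t → Bool) → Set ℝ)
    (hK : ∀ t (a : Fin t → Bool), ∃ y z : ℝ, y < z ∧ 0 ≤ y ∧ z ≤ 1 ∧ K t a = Icc y z)
    (hnest : ∀ (s t : ℕ) (hst : s ≤ t) (b : Fin t → Bool),
      K t b ⊆ K s (fun i => b (Fin.castLE hst i)))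
    (hdisj : ∀ t (a b : Fin t → Bool), a ≠ b → Disjoint (K t a) (K t b)) :
    ∃ t₀ : ℕ, ∀ t ≥ t₀,
      {a : Fin t → Bool | ε ≤ Metric.diam (K t a)}.ncard
        = {α : ℕ → Bool |
            ε ≤ Metric.diam (⋂ t' : ℕ, K t' (fun i : Fin t' => α i.val))}.ncard := by
  have hIcc : ∀ t a, ∃ y z : ℝ, K t a = Icc y z := fun t a =>
    let ⟨y, z, _, _, _, h⟩ := hK t a; ⟨y, z, h⟩
  have h01 : ∀ t a, K t a ⊆ Icc 0 1 := fun t a => by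
    obtain ⟨y, z, -, hy, hz, h⟩ := hK t a
    exact h ▸ Icc_subset_Icc hy hz
  have hbranch : ∀ α, α ∈ heavyBranches K ε ↔ ∀ t, (fun i : Fin t => α i) ∈ heavyWords K ε t :=
    fun α => mem_heavyBranches_iff hIcc hnest hε
  have hfin : (heavyBranches K ε).Finite := finite_of_forall_restrict_mem (heavyWords K ε)
    (card_heavyWords_le hIcc h01 hdisj hε) fun α hα => (hbranch α).1 hα
  obtain ⟨t₀, ht₀⟩ := ((eventually_injOn_restrict hfin.toFinset).and
    (eventually_forall_heavyWords_extend hIcc h01 hnest hdisj hε)).exists_forall_of_atTop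
  refine ⟨t₀, fun t ht => Eq.symm ?_⟩
  obtain ⟨hinj, hext⟩ := ht₀ t ht
  refine Set.ncard_congr (s := heavyBranches K ε) (fun α _ (i : Fin t) => α i)
    (fun α hα => mem_heavyWords.1 ((hbranch α).1 hα t))
    (fun α γ hα hγ => hinj (by simpa using hα) (by simpa using hγ)) fun a ha => ?_
  obtain ⟨α, hα, rfl⟩ := exists_restrict_eq_of_forall_extension
    (fun s => (heavyWords K ε s : Set (Fin s → Bool)))
    (fun _ _ hst _ hb => take_mem_heavyWords hIcc hnest hst hb) (hext a (mem_heavyWords.2 ha))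
  exact ⟨α, (hbranch α).2 hα, rfl⟩
end

section
/- Let f : I → I be continuous with zero topological entropy and let x ∈ I be such that the ω-limit set ω_f(x) is infinite (hence solenoidal with periods p_t = 2^t, contained in Q = ∩_t Q_t where Q_t is a disjoint union of 2^t periodic closed intervals K_a, a ∈ {0,1}^t). Then limsup_{ε→0} C̄_∞(x, ε) = 0; in particular, for every t and every ε ≤ min{dist(K_a, K_b) : a ≠ b in {0,1}^t}, C̄_∞(x, ε) ≤ 2^{−t}. -/
open Filter Metric Set
open scoped Classical

open RQA

/-!
Eventually the orbit of `x` shadows the cycle of level-`(t+1)` intervals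
`n ↦ K (t+1) (word (t+1) n)`: it approaches `ω(x)`, hence the union of these intervals, and by
uniform continuity it cannot jump between two of them, as they are a positive distance apart.
Each level-`t` interval contains two disjoint level-`(t+1)` intervals, and only one of them can
contain the endpoint realising the gap (at least `ε`) to another level-`t` interval. So if
`i ≢ j [MOD 2^t]`, within `2^(t+1)` steps the orbits from times `i` and `j` are near two
level-`(t+1)` intervals more than `ε` apart. After a transient, Bowen-`ε`-close pairs of times are
thus congruent mod `2^t`, a set of pairs of density at most `2^(-t)`; letting `t → ∞` as `ε → 0`
gives the limit `0`.
-/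

open Topology

namespace RQA

theorem setDist_le_dist {A B : Set ℝ} {p q : ℝ} (hp : p ∈ A) (hq : q ∈ B) :
    setDist A B ≤ dist p q :=
  csInf_le ⟨0, by rintro _ ⟨a, -, b, -, rfl⟩; exact dist_nonneg⟩ ⟨p, hp, q, hq, rfl⟩

theorem le_setDist {A B : Set ℝ} (hA : A.Nonempty) (hB : B.Nonempty) {c : ℝ}
    (h : ∀ p ∈ A, ∀ q ∈ B, c ≤ dist p q) : c ≤ setDist A B := by
  obtain ⟨a, ha⟩ := hA
  obtain ⟨b, hb⟩ := hB
  exact le_csInf ⟨dist a b, a, ha, b, hb, rfl⟩ (by rintro _ ⟨p, hp, q, hq, rfl⟩; exact h p hp q hq)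

theorem setDist_Icc {a b c d : ℝ} (hab : a ≤ b) (hcd : c ≤ d) :
    setDist (Icc a b) (Icc c d) = max 0 (max (c - b) (a - d)) := by
  refine le_antisymm ?_ (le_setDist (nonempty_Icc.2 hab) (nonempty_Icc.2 hcd) ?_)
  · rcases lt_or_ge b c with hbc | hcb
    · refine (setDist_le_dist (right_mem_Icc.2 hab) (left_mem_Icc.2 hcd)).trans ?_
      rw [Real.dist_eq, abs_sub_comm, abs_of_pos (sub_pos.2 hbc)]
      exact le_max_of_le_right (le_max_left _ _)
    rcases lt_or_ge d a with hda | had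
    · refine (setDist_le_dist (left_mem_Icc.2 hab) (right_mem_Icc.2 hcd)).trans ?_
      rw [Real.dist_eq, abs_of_pos (sub_pos.2 hda)]
      exact le_max_of_le_right (le_max_right _ _)
    · have hp : max a c ∈ Icc a b := ⟨le_max_left _ _, max_le hab hcb⟩
      have hq : max a c ∈ Icc c d := ⟨le_max_right _ _, max_le had hcd⟩
      refine (setDist_le_dist hp hq).trans ?_
      rw [dist_self]
      exact le_max_left _ _
  · intro p hp q hq
    rw [Real.dist_eq]
    exact max_le (abs_nonneg _) (max_le (by linarith [neg_abs_le (p - q), hp.2, hq.1])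
      (by linarith [le_abs_self (p - q), hp.1, hq.2]))

theorem lt_or_lt_of_disjoint_Icc {a b c d : ℝ} (hab : a ≤ b) (hcd : c ≤ d)
    (h : Disjoint (Icc a b) (Icc c d)) : b < c ∨ d < a := by
  by_contra! hle
  exact disjoint_left.1 h (⟨le_max_left _ _, max_le hab hle.1⟩ : max a c ∈ Icc a b)
    ⟨le_max_right _ _, max_le hle.2 hcd⟩

theorem setDist_Icc_pos_of_disjoint {a b c d : ℝ} (hab : a ≤ b) (hcd : c ≤ d)
    (h : Disjoint (Icc a b) (Icc c d)) : 0 < setDist (Icc a b) (Icc c d) := by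
  rw [setDist_Icc hab hcd]
  rcases lt_or_lt_of_disjoint_Icc hab hcd h with h | h
  · exact lt_max_of_lt_right (lt_max_of_lt_left (sub_pos.2 h))
  · exact lt_max_of_lt_right (lt_max_of_lt_right (sub_pos.2 h))

theorem eventually_forall_le_setDist {ι : Type*} [Finite ι] {I : ι → Set ℝ}
    (hI : ∀ i, ∃ a b, a ≤ b ∧ I i = Icc a b) (hdisj : ∀ i j, i ≠ j → Disjoint (I i) (I j)) :
    ∀ᶠ ε in 𝓝[>] (0 : ℝ), ∀ i j, i ≠ j → ε ≤ setDist (I i) (I j) := by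
  refine eventually_all.2 fun i => eventually_all.2 fun j => ?_
  by_cases hij : i = j
  · exact .of_forall fun _ h => absurd hij h
  obtain ⟨a, b, hab, hi⟩ := hI i
  obtain ⟨c, d, hcd, hj⟩ := hI j
  have hpos : 0 < setDist (I i) (I j) := by
    have h := hdisj i j hij
    rw [hi, hj] at h ⊢
    exact setDist_Icc_pos_of_disjoint hab hcd h
  filter_upwards [nhdsWithin_le_nhds (eventually_le_nhds hpos)] with ε hε _ using hε

theorem lt_max_setDist_Icc {a b c d a₁ b₁ a₂ b₂ c₁ d₁ c₂ d₂ ε : ℝ}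
    (h₁ : a₁ ≤ b₁) (h₂ : a₂ ≤ b₂) (h₃ : c₁ ≤ d₁) (h₄ : c₂ ≤ d₂)
    (hA₁ : Icc a₁ b₁ ⊆ Icc a b) (hA₂ : Icc a₂ b₂ ⊆ Icc a b)
    (hB₁ : Icc c₁ d₁ ⊆ Icc c d) (hB₂ : Icc c₂ d₂ ⊆ Icc c d)
    (hA : Disjoint (Icc a₁ b₁) (Icc a₂ b₂)) (hε : 0 < ε)
    (hAB : ε ≤ setDist (Icc a b) (Icc c d)) :
    ε < max (setDist (Icc a₁ b₁) (Icc c₁ d₁)) (setDist (Icc a₂ b₂) (Icc c₂ d₂)) := by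
  rw [Icc_subset_Icc_iff h₁] at hA₁
  rw [Icc_subset_Icc_iff h₂] at hA₂
  rw [Icc_subset_Icc_iff h₃] at hB₁
  rw [Icc_subset_Icc_iff h₄] at hB₂
  rw [setDist_Icc (by linarith) (by linarith)] at hAB
  rw [setDist_Icc h₁ h₃, setDist_Icc h₂ h₄]
  by_contra! hle
  simp only [max_le_iff] at hle
  simp only [le_max_iff] at hAB
  rcases hAB with hAB | hAB | hAB
  · linarith
  · exact disjoint_left.1 hA (⟨by linarith, by linarith⟩ : b ∈ Icc a₁ b₁) ⟨by linarith, by linarith⟩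
  · exact disjoint_left.1 hA (⟨by linarith, by linarith⟩ : a ∈ Icc a₁ b₁) ⟨by linarith, by linarith⟩

theorem word_eq_word_iff {t m n : ℕ} : word t m = word t n ↔ m ≡ n [MOD 2 ^ t] := by
  have hmod : ∀ k, word t (k % 2 ^ t) = word t k := fun k => by
    funext i
    simp [word, Nat.testBit_mod_two_pow, i.isLt]
  refine ⟨fun h => Nat.eq_of_testBit_eq fun i => ?_, fun h => by rw [← hmod m, h, hmod]⟩
  rcases lt_or_ge i t with hi | hi
  · simpa [word, Nat.testBit_mod_two_pow, hi] using congrFun h ⟨i, hi⟩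
  · have hlt : ∀ k, k % 2 ^ t < 2 ^ i := fun k =>
      (Nat.mod_lt _ (by positivity)).trans_le (Nat.pow_le_pow_right two_pos hi)
    rw [Nat.testBit_lt_two_pow (hlt m), Nat.testBit_lt_two_pow (hlt n)]

theorem word_surjective (t : ℕ) : Function.Surjective (word t) := by
  have hinj : Function.Injective (fun n : Fin (2 ^ t) => word t n) := fun m n h =>
    Fin.ext (Nat.ModEq.eq_of_lt_of_lt (word_eq_word_iff.1 h) m.isLt n.isLt)
  intro a
  obtain ⟨n, hn⟩ := ((Fintype.bijective_iff_injective_and_card _).2 ⟨hinj, by simp⟩).2 a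
  exact ⟨n, hn⟩

theorem exists_lt_add_modEq {q : ℕ} (hq : 0 < q) (m r : ℕ) : ∃ k < q, m + k ≡ r [MOD q] := by
  have : NeZero q := ⟨hq.ne'⟩
  refine ⟨((r : ZMod q) - m).val, ZMod.val_lt _, (ZMod.natCast_eq_natCast_iff _ _ _).1 ?_⟩
  simp

section Orbit

variable {X : Type*} [MetricSpace X]

theorem eventually_exists_dist_lt_of_omegaSet_subset {f : X → X} {x : X} {C U : Set X}
    (hC : IsCompact C) (horb : ∀ n, f^[n] x ∈ C) (hU : omegaSet f x ⊆ U) {δ : ℝ} (hδ : 0 < δ) :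
    ∀ᶠ n in atTop, ∃ p ∈ U, dist (f^[n] x) p < δ := by
  by_contra h
  obtain ⟨φ, hφ, hfar⟩ := extraction_of_frequently_atTop (not_eventually.1 h)
  obtain ⟨y, -, ψ, hψ, hlim⟩ := hC.tendsto_subseq fun n => horb (φ n)
  have hy : y ∈ U := hU ⟨φ ∘ ψ, hφ.comp hψ, hlim⟩
  obtain ⟨n, hn⟩ := (hlim.eventually (ball_mem_nhds y hδ)).exists
  exact hfar (ψ n) ⟨y, hy, hn⟩

theorem exists_shadowing_s11 {f : X → X} {x : X} {C : Set X} (hC : IsCompact C)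
    (hf : ContinuousOn f C) (hmaps : MapsTo f C C) (hx : x ∈ C) {L : ℕ → Set X}
    (hLC : ∀ n, L n ⊆ C) (hfL : ∀ n, MapsTo f (L n) (L (n + 1))) {g : ℝ} (hg : 0 < g)
    (hsep : ∀ m n, L m ≠ L n → ∀ p ∈ L m, ∀ q ∈ L n, g ≤ dist p q)
    (homega : omegaSet f x ⊆ ⋃ n, L n) {η : ℝ} (hη : 0 < η) :
    ∃ N c, ∀ k, ∃ p ∈ L (c + k), dist (f^[N + k] x) p < η := by
  have horb : ∀ n, f^[n] x ∈ C := fun n => hmaps.iterate n hx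
  obtain ⟨δ, hδ, hcont⟩ :=
    uniformContinuousOn_iff.1 (hC.uniformContinuousOn_of_continuous hf) (g / 3) (by positivity)
  set η' := min η (min δ (g / 3))
  have hη' : 0 < η' := lt_min hη (lt_min hδ (by positivity))
  obtain ⟨N, hN⟩ := eventually_atTop.1
    (eventually_exists_dist_lt_of_omegaSet_subset hC horb homega hη')
  obtain ⟨p₀, hp₀, hN₀⟩ := hN N le_rfl
  obtain ⟨c, hc⟩ := mem_iUnion.1 hp₀
  refine ⟨N, c, fun k => ?_⟩
  suffices h : ∃ p ∈ L (c + k), dist (f^[N + k] x) p < η' from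
    h.imp fun p hp => ⟨hp.1, hp.2.trans_le (min_le_left _ _)⟩
  induction k with
  | zero => exact ⟨p₀, hc, hN₀⟩
  | succ k ih =>
    obtain ⟨p, hp, hdist⟩ := ih
    obtain ⟨q, hq, hdist'⟩ := hN (N + (k + 1)) (by omega)
    obtain ⟨m, hm⟩ := mem_iUnion.1 hq
    have hstep : dist (f^[N + (k + 1)] x) (f p) < g / 3 := by
      rw [← add_assoc, Function.iterate_succ_apply']
      exact hcont _ (horb _) _ (hLC _ hp)
        (hdist.trans_le ((min_le_right _ _).trans (min_le_left _ _)))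
    by_cases hmk : L m = L (c + (k + 1))
    · exact ⟨q, hmk ▸ hm, hdist'⟩
    · have hfar := hsep _ _ hmk q hm (f p) (hfL _ hp)
      have hclose : dist q (f p) < g / 3 + g / 3 :=
        (dist_triangle_left _ _ _).trans_lt (add_lt_add
          (hdist'.trans_le ((min_le_right _ _).trans (min_le_right _ _))) hstep)
      linarith

theorem exists_lt_dist_iterate_of_shadowing {f : X → X} {x : X} {L : ℕ → Set X} {N c p q : ℕ}
    {η ε : ℝ} (hshadow : ∀ k, ∃ y ∈ L (c + k), dist (f^[N + k] x) y < η)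
    (hsep : ∀ m n, ¬ m ≡ n [MOD p] → ∃ k < q, ∀ y ∈ L (m + k), ∀ z ∈ L (n + k),
      ε + 2 * η ≤ dist y z)
    {i j : ℕ} (hi : N ≤ i) (hj : N ≤ j) (hij : ¬ i ≡ j [MOD p]) :
    ∃ k < q, ε < dist (f^[i + k] x) (f^[j + k] x) := by
  have hmn : ¬ c + (i - N) ≡ c + (j - N) [MOD p] := fun h => hij <| by
    simpa [Nat.sub_add_cancel hi, Nat.sub_add_cancel hj] using
      (Nat.ModEq.add_left_cancel' c h).add_right N
  obtain ⟨k, hkq, hk⟩ := hsep _ _ hmn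
  refine ⟨k, hkq, ?_⟩
  obtain ⟨y, hy, hyi⟩ := hshadow (i - N + k)
  obtain ⟨z, hz, hzj⟩ := hshadow (j - N + k)
  rw [← add_assoc, Nat.add_sub_cancel' hi] at hyi
  rw [← add_assoc, Nat.add_sub_cancel' hj] at hzj
  have := hk y (by rwa [add_assoc]) z (by rwa [add_assoc])
  have := dist_triangle4 y (f^[i + k] x) (f^[j + k] x) z
  rw [dist_comm] at hyi
  linarith

end Orbit

open Finset in
theorem card_filter_modEq_le (n : ℕ) {q : ℕ} (hq : 0 < q) :
    #{p ∈ range n ×ˢ range n | p.1 ≡ p.2 [MOD q]} ≤ n * (n / q + 1) := by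
  calc #{p ∈ range n ×ˢ range n | p.1 ≡ p.2 [MOD q]}
      = ∑ i ∈ range n, n.count (· ≡ i [MOD q]) := by
        simp only [card_filter, sum_product, Nat.count_eq_card_filter_range, Nat.ModEq.comm]
    _ ≤ ∑ i ∈ range n, (n / q + 1) := by
        gcongr with i
        rw [Nat.count_modEq_card _ hq]
        split_ifs <;> omega
    _ = n * (n / q + 1) := by simp

open Finset in
theorem card_filter_le_of_modEq (P : ℕ × ℕ → Prop) [DecidablePred P] {N q : ℕ} (hq : 0 < q)
    (hP : ∀ i j, N ≤ i → N ≤ j → P (i, j) → i ≡ j [MOD q]) (n : ℕ) :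
    #{p ∈ range n ×ˢ range n | P p} ≤ 2 * N * n + n * (n / q + 1) := by
  have hsub : {p ∈ range n ×ˢ range n | P p} ⊆
      (range N ×ˢ range n ∪ range n ×ˢ range N) ∪
        {p ∈ range n ×ˢ range n | p.1 ≡ p.2 [MOD q]} := by
    rintro ⟨i, j⟩ hij
    simp only [Finset.mem_filter, Finset.mem_product, Finset.mem_range] at hij
    simp only [Finset.mem_union, Finset.mem_filter, Finset.mem_product, Finset.mem_range]
    by_cases hi : i < N
    · exact .inl (.inl ⟨hi, hij.1.2⟩)
    by_cases hj : j < N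
    · exact .inl (.inr ⟨hij.1.1, hj⟩)
    · exact .inr ⟨hij.1, hP i j (not_lt.1 hi) (not_lt.1 hj) hij.2⟩
  calc #{p ∈ range n ×ˢ range n | P p}
      ≤ #(range N ×ˢ range n) + #(range n ×ˢ range N) +
          #{p ∈ range n ×ˢ range n | p.1 ≡ p.2 [MOD q]} :=
        (Finset.card_le_card hsub).trans ((Finset.card_union_le _ _).trans
          (by gcongr; exact Finset.card_union_le _ _))
    _ ≤ 2 * N * n + n * (n / q + 1) := by
        rw [card_product, card_product, card_range, card_range]
        linarith [card_filter_modEq_le n hq]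

theorem limsup_le_of_le_of_tendsto {u v : ℕ → ℝ} (hu : ∀ n, 0 ≤ u n)
    (huv : ∀ᶠ n in atTop, u n ≤ v n) {c : ℝ} (hv : Tendsto v atTop (𝓝 c)) :
    limsup u atTop ≤ c :=
  hv.limsup_eq ▸ limsup_le_limsup huv
    (isCoboundedUnder_le_of_eventually_le _ (.of_forall hu)) hv.isBoundedUnder_le

open Finset in
theorem limsup_card_filter_div_sq_le (P : ℕ × ℕ → Prop) [DecidablePred P] {N q : ℕ}
    (hq : 0 < q) (hP : ∀ i j, N ≤ i → N ≤ j → P (i, j) → i ≡ j [MOD q]) :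
    limsup (fun n : ℕ => (#{p ∈ range n ×ˢ range n | P p} : ℝ) / (n : ℝ) ^ 2) atTop
      ≤ (q : ℝ)⁻¹ := by
  have hle : ∀ n : ℕ, 0 < n → (#{p ∈ range n ×ˢ range n | P p} : ℝ) / (n : ℝ) ^ 2
      ≤ 2 * N / n + (q : ℝ)⁻¹ + 1 / n := by
    intro n hn
    have hdiv : ((n / q : ℕ) : ℝ) ≤ n / q := Nat.cast_div_le
    have hcard := card_filter_le_of_modEq P hq hP n
    rw [div_le_iff₀ (by positivity)]
    calc (#{p ∈ range n ×ˢ range n | P p} : ℝ) ≤ 2 * N * n + n * ((n / q : ℕ) + 1) := by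
          exact_mod_cast hcard
      _ ≤ 2 * N * n + n * (n / q + 1) := by gcongr
      _ = _ := by field_simp; ring
  have hlim : Tendsto (fun n : ℕ => 2 * N / n + (q : ℝ)⁻¹ + 1 / n) atTop (𝓝 (q : ℝ)⁻¹) := by
    simpa using ((tendsto_const_div_atTop_nhds_zero_nat (2 * N : ℝ)).add
      (tendsto_const_nhds (x := (q : ℝ)⁻¹))).add (tendsto_const_div_atTop_nhds_zero_nat (1 : ℝ))
  exact limsup_le_of_le_of_tendsto (fun n => by positivity)
    (eventually_atTop.2 ⟨1, fun n hn => hle n hn⟩) hlim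

section Correlation

variable {X : Type*} [MetricSpace X] (f : X → X) (x : X)

theorem corrSum_nonneg (m n : ℕ) (ε : ℝ) : 0 ≤ corrSum f x m n ε := by
  unfold corrSum; positivity

theorem corrSum_le_one (m n : ℕ) (ε : ℝ) : corrSum f x m n ε ≤ 1 := by
  refine div_le_one_of_le₀ ?_ (by positivity)
  calc (_ : ℝ) ≤ ((Finset.range n ×ˢ Finset.range n).card : ℝ) := by
        exact_mod_cast Finset.card_filter_le _ _
    _ = (n : ℝ) ^ 2 := by simp [sq]

theorem upperCorr_nonneg (m : ℕ) (ε : ℝ) : 0 ≤ upperCorr f x m ε :=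
  le_limsup_of_frequently_le (.of_forall fun n => corrSum_nonneg f x m n ε)
    (isBoundedUnder_of ⟨1, fun n => corrSum_le_one f x m n ε⟩)

theorem upperCorrInf_nonneg (ε : ℝ) : 0 ≤ upperCorrInf f x ε :=
  le_ciInf fun m => upperCorr_nonneg f x (m + 1) ε

theorem upperCorrInf_le_upperCorr {m : ℕ} (hm : 0 < m) (ε : ℝ) :
    upperCorrInf f x ε ≤ upperCorr f x m ε := by
  obtain ⟨m, rfl⟩ := Nat.exists_eq_add_one.2 hm
  exact ciInf_le ⟨0, by rintro _ ⟨m, rfl⟩; exact upperCorr_nonneg f x (m + 1) ε⟩ m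

end Correlation

section Dyadic

variable {K : ∀ t : ℕ, (Fin t → Bool) → Set ℝ}

theorem lt_max_setDist_word_succ
    (hI : ∀ t (a : Fin t → Bool), ∃ y z : ℝ, y ≤ z ∧ K t a = Icc y z)
    (hnest : ∀ (s t : ℕ) (hst : s ≤ t) (b : Fin t → Bool),
      K t b ⊆ K s (fun i => b (Fin.castLE hst i)))
    (hdisj : ∀ t (a b : Fin t → Bool), a ≠ b → Disjoint (K t a) (K t b))
    {t : ℕ} {ε : ℝ} (hε : 0 < ε)
    (hgap : ∀ a b : Fin t → Bool, a ≠ b → ε ≤ setDist (K t a) (K t b))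
    {d : ℕ} (hd : ¬ 0 ≡ d [MOD 2 ^ t]) :
    ε < max (setDist (K (t + 1) (word (t + 1) 0)) (K (t + 1) (word (t + 1) d)))
      (setDist (K (t + 1) (word (t + 1) (2 ^ t))) (K (t + 1) (word (t + 1) (2 ^ t + d)))) := by
  have hsub : ∀ n, K (t + 1) (word (t + 1) n) ⊆ K t (word t n) := fun n =>
    hnest t (t + 1) t.le_succ _
  have hA₂ := hsub (2 ^ t)
  have hB₂ := hsub (2 ^ t + d)
  rw [word_eq_word_iff.2 (Nat.modEq_zero_iff_dvd.2 dvd_rfl : 2 ^ t ≡ 0 [MOD 2 ^ t])] at hA₂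
  rw [word_eq_word_iff.2 (Nat.add_modEq_left : 2 ^ t + d ≡ d [MOD 2 ^ t])] at hB₂
  have hA := hdisj (t + 1) (word (t + 1) 0) (word (t + 1) (2 ^ t)) (by
    rw [Ne, word_eq_word_iff, Nat.ModEq, Nat.zero_mod,
      Nat.mod_eq_of_lt (Nat.pow_lt_pow_right one_lt_two t.lt_succ_self)]
    exact (pow_pos two_pos t).ne)
  have hAB := hgap _ _ (mt word_eq_word_iff.1 hd)
  have hA₁ := hsub 0
  have hB₁ := hsub d
  obtain ⟨a₁, b₁, h₁, e₁⟩ := hI _ (word (t + 1) 0)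
  obtain ⟨a₂, b₂, h₂, e₂⟩ := hI _ (word (t + 1) (2 ^ t))
  obtain ⟨c₁, d₁, h₃, e₃⟩ := hI _ (word (t + 1) d)
  obtain ⟨c₂, d₂, h₄, e₄⟩ := hI _ (word (t + 1) (2 ^ t + d))
  obtain ⟨a, b, -, eA⟩ := hI _ (word t 0)
  obtain ⟨c, c', -, eB⟩ := hI _ (word t d)
  simp only [e₁, e₂, e₃, e₄, eA, eB] at hA₁ hA₂ hB₁ hB₂ hA hAB ⊢
  exact lt_max_setDist_Icc h₁ h₂ h₃ h₄ hA₁ hA₂ hB₁ hB₂ hA hε hAB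

theorem exists_pos_forall_add_le_setDist_word
    (hI : ∀ t (a : Fin t → Bool), ∃ y z : ℝ, y ≤ z ∧ K t a = Icc y z)
    (hnest : ∀ (s t : ℕ) (hst : s ≤ t) (b : Fin t → Bool),
      K t b ⊆ K s (fun i => b (Fin.castLE hst i)))
    (hdisj : ∀ t (a b : Fin t → Bool), a ≠ b → Disjoint (K t a) (K t b))
    {t : ℕ} {ε : ℝ} (hε : 0 < ε)
    (hgap : ∀ a b : Fin t → Bool, a ≠ b → ε ≤ setDist (K t a) (K t b)) :
    ∃ γ > 0, ∀ m n, ¬ m ≡ n [MOD 2 ^ t] → ∃ k < 2 ^ (t + 1),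
      ε + γ ≤ setDist (K (t + 1) (word (t + 1) (m + k))) (K (t + 1) (word (t + 1) (n + k))) := by
  set L := fun n => K (t + 1) (word (t + 1) n)
  have hq : 0 < 2 ^ (t + 1) := by positivity
  have hslack : ∀ᶠ γ in 𝓝 0, ∀ d ∈ Finset.range (2 ^ (t + 1)), ¬ 0 ≡ d [MOD 2 ^ t] →
      ε + γ ≤ max (setDist (L 0) (L d)) (setDist (L (2 ^ t)) (L (2 ^ t + d))) := by
    refine (eventually_all_finset _).2 fun d _ => ?_
    by_cases hd : 0 ≡ d [MOD 2 ^ t]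
    · exact .of_forall fun _ h => absurd hd h
    have hlt := lt_max_setDist_word_succ hI hnest hdisj hε hgap hd
    filter_upwards [eventually_le_nhds (sub_pos.2 hlt)] with γ hγ _
    linarith
  obtain ⟨γ, hγ, hγpos⟩ := ((hslack.filter_mono nhdsWithin_le_nhds).and
    (self_mem_nhdsWithin : Ioi (0 : ℝ) ∈ 𝓝[>] 0)).exists
  refine ⟨γ, hγpos, fun m n hmn => ?_⟩
  obtain ⟨d, hdq, hd⟩ := exists_lt_add_modEq hq m n
  have hd0 : ¬ 0 ≡ d [MOD 2 ^ t] := fun h =>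
    hmn ((h.add_left m).trans (hd.of_dvd (pow_dvd_pow 2 t.le_succ)))
  obtain ⟨r, hr⟩ : ∃ r, ε + γ ≤ setDist (L r) (L (r + d)) := by
    rcases le_max_iff.1 (hγ d (Finset.mem_range.2 hdq) hd0) with h | h
    · exact ⟨0, by simpa using h⟩
    · exact ⟨2 ^ t, h⟩
  obtain ⟨k, hkq, hk⟩ := exists_lt_add_modEq hq m r
  have hk' : n + k ≡ r + d [MOD 2 ^ (t + 1)] :=
    calc n + k ≡ m + d + k [MOD 2 ^ (t + 1)] := (hd.add_right k).symm
      _ = m + k + d := by ring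
      _ ≡ r + d [MOD 2 ^ (t + 1)] := hk.add_right d
  exact ⟨k, hkq, by rwa [word_eq_word_iff.2 hk, word_eq_word_iff.2 hk']⟩

end Dyadic

theorem upperCorrInf_le_inv_two_pow (f : ℝ → ℝ) (hf : Continuous f)
    (hmaps : MapsTo f (Icc (0 : ℝ) 1) (Icc (0 : ℝ) 1))
    (x : ℝ) (hx : x ∈ Icc (0 : ℝ) 1)
    (K : ∀ t : ℕ, (Fin t → Bool) → Set ℝ)
    (hK : ∀ t (a : Fin t → Bool), ∃ y z : ℝ, y < z ∧ 0 ≤ y ∧ z ≤ 1 ∧ K t a = Icc y z)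
    (hnest : ∀ (s t : ℕ) (hst : s ≤ t) (b : Fin t → Bool),
      K t b ⊆ K s (fun i => b (Fin.castLE hst i)))
    (hdisj : ∀ t (a b : Fin t → Bool), a ≠ b → Disjoint (K t a) (K t b))
    (hdyn : ∀ t (n : ℕ), f '' K t (word t n) = K t (word t (n + 1)))
    (homega : omegaSet f x ⊆ ⋂ t : ℕ, ⋃ a : Fin t → Bool, K t a)
    (t : ℕ) (ε : ℝ) (hε : 0 < ε)
    (hgap : ∀ a b : Fin t → Bool, a ≠ b → ε ≤ setDist (K t a) (K t b)) :
    upperCorrInf f x ε ≤ ((2 : ℝ) ^ t)⁻¹ := by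
  set L : ℕ → Set ℝ := fun n => K (t + 1) (word (t + 1) n)
  have hLC : ∀ n, L n ⊆ Icc 0 1 := fun n => by
    obtain ⟨y, z, -, hy, hz, e⟩ := hK (t + 1) (word (t + 1) n)
    simpa only [L, e] using Icc_subset_Icc hy hz
  have hfL : ∀ n, MapsTo f (L n) (L (n + 1)) := fun n => by
    simpa only [L, hdyn] using mapsTo_image f (L n)
  have homega' : omegaSet f x ⊆ ⋃ n, L n := fun y hy => by
    obtain ⟨a, ha⟩ := mem_iUnion.1 (mem_iInter.1 (homega hy) (t + 1))
    obtain ⟨n, rfl⟩ := word_surjective (t + 1) a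
    exact mem_iUnion.2 ⟨n, ha⟩
  have hI : ∀ s (a : Fin s → Bool), ∃ y z, y ≤ z ∧ K s a = Icc y z := fun s a =>
    (hK s a).imp fun y ⟨z, h, _, _, e⟩ => ⟨z, h.le, e⟩
  obtain ⟨g, hgap_succ, hg⟩ := ((eventually_forall_le_setDist (hI (t + 1)) (hdisj (t + 1))).and
    (self_mem_nhdsWithin : Ioi (0 : ℝ) ∈ 𝓝[>] 0)).exists
  have hsepL : ∀ m n, L m ≠ L n → ∀ p ∈ L m, ∀ q ∈ L n, g ≤ dist p q := fun m n hmn p hp q hq =>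
    (hgap_succ _ _ fun h => hmn (congrArg (K (t + 1)) h)).trans (setDist_le_dist hp hq)
  obtain ⟨γ, hγ, hsep⟩ := exists_pos_forall_add_le_setDist_word hI hnest hdisj hε hgap
  obtain ⟨N, c, hshadow⟩ := exists_shadowing_s11 isCompact_Icc hf.continuousOn hmaps hx hLC hfL hg
    hsepL homega' (half_pos hγ)
  have hP : ∀ i j, N ≤ i → N ≤ j →
      (∀ k < 2 ^ (t + 1), dist (f^[i + k] x) (f^[j + k] x) ≤ ε) → i ≡ j [MOD 2 ^ t] := by
    intro i j hi hj hclose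
    by_contra hij
    obtain ⟨k, hk, hlt⟩ := exists_lt_dist_iterate_of_shadowing (ε := ε) hshadow
      (fun m n hmn => (hsep m n hmn).imp fun k ⟨hk, h⟩ =>
        ⟨hk, fun y hy z hz => by linarith [setDist_le_dist hy hz]⟩) hi hj hij
    exact (hclose k hk).not_gt hlt
  calc upperCorrInf f x ε ≤ upperCorr f x (2 ^ (t + 1)) ε :=
        upperCorrInf_le_upperCorr f x (by positivity) ε
    _ ≤ ((2 ^ t : ℕ) : ℝ)⁻¹ := limsup_card_filter_div_sq_le _ (by positivity) hP
    _ = ((2 : ℝ) ^ t)⁻¹ := by push_cast; rfl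

end RQA

theorem stmt_11_general (f : ℝ → ℝ) (hf : Continuous f)
    (hmaps : MapsTo f (Icc (0 : ℝ) 1) (Icc (0 : ℝ) 1))
    (x : ℝ) (hx : x ∈ Icc (0 : ℝ) 1)
    (K : ∀ t : ℕ, (Fin t → Bool) → Set ℝ)
    (hK : ∀ t (a : Fin t → Bool), ∃ y z : ℝ, y < z ∧ 0 ≤ y ∧ z ≤ 1 ∧ K t a = Icc y z)
    (hnest : ∀ (s t : ℕ) (hst : s ≤ t) (b : Fin t → Bool),
      K t b ⊆ K s (fun i => b (Fin.castLE hst i)))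
    (hdisj : ∀ t (a b : Fin t → Bool), a ≠ b → Disjoint (K t a) (K t b))
    (hdyn : ∀ t (n : ℕ), f '' K t (word t n) = K t (word t (n + 1)))
    (homega : omegaSet f x ⊆ ⋂ t : ℕ, ⋃ a : Fin t → Bool, K t a) :
    (∀ t : ℕ, ∀ ε : ℝ, 0 < ε →
      (∀ a b : Fin t → Bool, a ≠ b → ε ≤ setDist (K t a) (K t b)) →
      upperCorrInf f x ε ≤ ((2 : ℝ) ^ t)⁻¹) ∧
    limsup (fun ε => upperCorrInf f x ε) (nhdsWithin (0 : ℝ) (Set.Ioi 0)) = 0 := by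
  have hbound := upperCorrInf_le_inv_two_pow f hf hmaps x hx K hK hnest hdisj hdyn homega
  refine ⟨hbound, Tendsto.limsup_eq (tendsto_order.2 ⟨fun a ha =>
    .of_forall fun ε => ha.trans_le (upperCorrInf_nonneg f x ε), fun a ha => ?_⟩)⟩
  obtain ⟨t, ht⟩ := exists_pow_lt_of_lt_one ha (by norm_num : (2 : ℝ)⁻¹ < 1)
  filter_upwards [eventually_forall_le_setDist
    (fun b => (hK t b).imp fun y ⟨z, h, _, _, e⟩ => ⟨z, h.le, e⟩) (hdisj t), self_mem_nhdsWithin]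
    with ε hgap hε
  exact (hbound t ε hε hgap).trans_lt (by rwa [inv_pow] at ht)

/-- for a zero-entropy interval map (the solenoidal dyadic
structure of the infinite ω-limit set, which holds for zero-entropy maps, is
given as hypothesis), `C̄_∞(x,ε) ≤ 2^{-t}` whenever `ε` is below the minimal
distance between distinct level-`t` intervals, and `limsup_{ε→0} C̄_∞(x,ε) = 0`. -/
theorem stmt_11 (f : ℝ → ℝ) (hf : Continuous f)
    (hmaps : MapsTo f (Icc (0 : ℝ) 1) (Icc (0 : ℝ) 1))
    (x : ℝ) (hx : x ∈ Icc (0 : ℝ) 1)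
    (K : ∀ t : ℕ, (Fin t → Bool) → Set ℝ)
    (hK : ∀ t (a : Fin t → Bool), ∃ y z : ℝ, y < z ∧ 0 ≤ y ∧ z ≤ 1 ∧ K t a = Icc y z)
    (hnest : ∀ (s t : ℕ) (hst : s ≤ t) (b : Fin t → Bool),
      K t b ⊆ K s (fun i => b (Fin.castLE hst i)))
    (hdisj : ∀ t (a b : Fin t → Bool), a ≠ b → Disjoint (K t a) (K t b))
    (hdyn : ∀ t (n : ℕ), f '' K t (word t n) = K t (word t (n + 1)))
    (hinf : (omegaSet f x).Infinite)
    (homega : omegaSet f x ⊆ ⋂ t : ℕ, ⋃ a : Fin t → Bool, K t a) :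
    (∀ t : ℕ, ∀ ε : ℝ, 0 < ε →
      (∀ a b : Fin t → Bool, a ≠ b → ε ≤ setDist (K t a) (K t b)) →
      upperCorrInf f x ε ≤ ((2 : ℝ) ^ t)⁻¹) ∧
    limsup (fun ε => upperCorrInf f x ε) (nhdsWithin (0 : ℝ) (Set.Ioi 0)) = 0 :=
  stmt_11_general f hf hmaps x hx K hK hnest hdisj hdyn homega
end

section
/- Let f : I → I be continuous and x ∈ I have a solenoidal ω-limit set contained in Q = ∩_t Q_t, where Q_t = ⊔_{i<p_t} f^i(J_t) with J_t a p_t-periodic closed interval. Then for every t there exists n₀ such that f^n(x) ∈ Q_t for every n ≥ n₀. -/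
open Filter Metric Set
open scoped Classical

open RQA

private lemma aux_mul (f : ℝ → ℝ) (J : Set ℝ) (p : ℕ) (hper : f^[p] '' J = J) :
    ∀ k, f^[p * k] '' J = J := by
  intro k
  induction k with
  | zero => simp
  | succ k ih =>
    have h : p * (k + 1) = p * k + p := by ring
    rw [h, Function.iterate_add, Set.image_comp, hper, ih]

private lemma aux_mod (f : ℝ → ℝ) (J : Set ℝ) (p : ℕ) (hper : f^[p] '' J = J) (i : ℕ) :
    f^[i] '' J = f^[i % p] '' J := by
  conv_lhs => rw [← Nat.mod_add_div i p]
  rw [Function.iterate_add, Set.image_comp, aux_mul f J p hper]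

private lemma aux_mem (f : ℝ → ℝ) (J : Set ℝ) (p : ℕ) (hper : f^[p] '' J = J)
    {z : ℝ} {i : ℕ} (hz : z ∈ f^[i] '' J) (k : ℕ) :
    f^[k] z ∈ f^[(k + i) % p] '' J := by
  rw [← aux_mod f J p hper, Function.iterate_add, Set.image_comp]
  exact Set.mem_image_of_mem _ hz

private lemma omega_iter {f : ℝ → ℝ} (hf : Continuous f) {x y : ℝ}
    (hy : y ∈ omegaSet f x) (k : ℕ) : f^[k] y ∈ omegaSet f x := by
  obtain ⟨φ, hφ, hty⟩ := hy
  refine ⟨fun n => φ n + k, fun a b h => by simpa using hφ h, ?_⟩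
  have h1 : Tendsto (fun n => f^[k] (f^[φ n] x)) atTop (nhds (f^[k] y)) :=
    ((hf.iterate k).tendsto y).comp hty
  have heq : ∀ n, f^[φ n + k] x = f^[k] (f^[φ n] x) := fun n => by
    rw [add_comm, Function.iterate_add_apply]
  simpa only [heq] using h1

/-- for a solenoidal ω-limit set, the orbit of `x` eventually
enters (and stays in) each `Q_t = ⊔_{i < p_t} f^i(J_t)`. -/
theorem stmt_12 (f : ℝ → ℝ) (hf : Continuous f)
    (hmaps : MapsTo f (Icc (0 : ℝ) 1) (Icc (0 : ℝ) 1))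
    (x : ℝ) (hx : x ∈ Icc (0 : ℝ) 1)
    (p : ℕ → ℕ) (hp0 : 2 ≤ p 0) (hpmono : StrictMono p)
    (J : ℕ → Set ℝ)
    (hJ : ∀ t, ∃ y z : ℝ, y < z ∧ 0 ≤ y ∧ z ≤ 1 ∧ J t = Icc y z)
    (hJnest : ∀ t, J (t + 1) ⊆ J t)
    (hJdisj : ∀ t, ∀ i j : ℕ, i < p t → j < p t → i ≠ j →
      Disjoint (f^[i] '' J t) (f^[j] '' J t))
    (hJper : ∀ t, f^[p t] '' J t = J t)
    (homega : omegaSet f x ⊆ ⋂ t : ℕ, ⋃ i ∈ Finset.range (p t), f^[i] '' J t) :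
    ∀ t : ℕ, ∃ n₀ : ℕ, ∀ n ≥ n₀, f^[n] x ∈ ⋃ i ∈ Finset.range (p t), f^[i] '' J t := by
  intro t
  -- the orbit stays in [0,1]
  have horb : ∀ n, f^[n] x ∈ Icc (0:ℝ) 1 := by
    intro n
    induction n with
    | zero => exact hx
    | succ n ih => rw [Function.iterate_succ_apply']; exact hmaps ih
  -- the ω-limit set is nonempty
  obtain ⟨y0, -, φ0, hφ0, hty0⟩ := isCompact_Icc.tendsto_subseq horb
  have hy0 : y0 ∈ omegaSet f x := ⟨φ0, hφ0, hty0⟩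
  have hPpos : 0 < p t := by
    have := hpmono.monotone (Nat.zero_le t); omega
  set Q : Set ℝ := ⋃ i ∈ Finset.range (p t), f^[i] '' J t with hQ
  have hmemQ : ∀ z : ℝ, z ∈ Q ↔ ∃ i, i < p t ∧ z ∈ f^[i] '' J t := by
    intro z
    simp only [hQ, Set.mem_iUnion, Finset.mem_range, exists_prop]
  -- Q is forward invariant
  have hstep : ∀ z ∈ Q, f z ∈ Q := by
    intro z hz
    rw [hmemQ] at hz ⊢
    obtain ⟨i, hi, hzi⟩ := hz
    exact ⟨(1 + i) % p t, Nat.mod_lt _ hPpos, aux_mem f (J t) (p t) (hJper t) hzi 1⟩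
  have hstay : ∀ n, f^[n] x ∈ Q → ∀ k, f^[n + k] x ∈ Q := by
    intro n hn k
    induction k with
    | zero => simpa using hn
    | succ k ih =>
      have h : n + (k + 1) = (n + k) + 1 := rfl
      rw [h, Function.iterate_succ_apply']
      exact hstep _ ih
  suffices h : ∃ n₀, f^[n₀] x ∈ Q by
    obtain ⟨n₀, hn₀⟩ := h
    refine ⟨n₀, fun n hn => ?_⟩
    have := hstay n₀ hn₀ (n - n₀)
    rwa [Nat.add_sub_cancel' hn] at this
  -- each piece is a closed interval
  obtain ⟨a, b, hab, ha0, hb1, hJt⟩ := hJ t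
  have hIcc : ∀ i : ℕ, f^[i] '' J t = Icc (sInf (f^[i] '' J t)) (sSup (f^[i] '' J t)) := by
    intro i
    refine eq_Icc_of_connected_compact ?_ ?_
    · rw [hJt]
      exact ⟨(Set.nonempty_Icc.2 hab.le).image _,
        isPreconnected_Icc.image _ (hf.iterate i).continuousOn⟩
    · rw [hJt]
      exact isCompact_Icc.image (hf.iterate i)
  -- the (finite) set of endpoints
  set B : Set ℝ := ⋃ i ∈ Finset.range (p t),
      ({sInf (f^[i] '' J t), sSup (f^[i] '' J t)} : Set ℝ) with hB
  have hBfin : B.Finite :=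
    Set.Finite.biUnion (Finset.finite_toSet _)
      (fun i _ => (Set.finite_singleton _).insert _)
  by_cases hcase : ∃ y ∈ omegaSet f x, y ∉ B
  · -- some ω-limit point is in the interior of a piece
    obtain ⟨y, hy, hyB⟩ := hcase
    have hyQ : y ∈ Q := by
      have h := homega hy
      rw [Set.mem_iInter] at h
      exact h t
    rw [hmemQ] at hyQ
    obtain ⟨i, hi, hyi⟩ := hyQ
    set c := sInf (f^[i] '' J t) with hc
    set d := sSup (f^[i] '' J t) with hd
    have hyi' : y ∈ Icc c d := by rw [← hIcc i] at *; exact hyi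
    have hync : y ≠ c := by
      intro h; apply hyB
      simp only [hB, Set.mem_iUnion, Finset.mem_range, exists_prop]
      exact ⟨i, hi, by simp [h, hc]⟩
    have hynd : y ≠ d := by
      intro h; apply hyB
      simp only [hB, Set.mem_iUnion, Finset.mem_range, exists_prop]
      exact ⟨i, hi, by simp [h, hd]⟩
    have hcy : c < y := lt_of_le_of_ne hyi'.1 (Ne.symm hync)
    have hyd : y < d := lt_of_le_of_ne hyi'.2 hynd
    set ε := min (y - c) (d - y) with hε
    have hεpos : 0 < ε := lt_min (by linarith) (by linarith)
    have hball : ball y ε ⊆ Icc c d := by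
      intro w hw
      rw [mem_ball, Real.dist_eq, abs_lt] at hw
      have h1 : ε ≤ y - c := min_le_left _ _
      have h2 : ε ≤ d - y := min_le_right _ _
      exact ⟨by linarith [hw.1], by linarith [hw.2]⟩
    obtain ⟨φ, hφm, hty⟩ := hy
    have hev : ∀ᶠ n in atTop, f^[φ n] x ∈ ball y ε := hty (ball_mem_nhds y hεpos)
    obtain ⟨N, hN⟩ := hev.exists
    refine ⟨φ N, ?_⟩
    rw [hmemQ]
    exact ⟨i, hi, by rw [hIcc i]; exact hball hN⟩
  · -- otherwise ω(x) ⊆ B is finite, giving a periodic point: impossible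
    exfalso
    push_neg at hcase
    have hgB : ∀ k, f^[k] y0 ∈ B := fun k => hcase _ (omega_iter hf hy0 k)
    have : Finite ↥B := hBfin.to_subtype
    obtain ⟨m₁, m₂, hne, heq⟩ :=
      Finite.exists_ne_map_eq_of_infinite (fun k : ℕ => (⟨f^[k] y0, hgB k⟩ : B))
    have heq' : f^[m₁] y0 = f^[m₂] y0 := congrArg Subtype.val heq
    obtain ⟨m, m', hlt, heqm⟩ : ∃ m m', m < m' ∧ f^[m] y0 = f^[m'] y0 := by
      rcases hne.lt_or_gt with h | h
      · exact ⟨m₁, m₂, h, heq'⟩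
      · exact ⟨m₂, m₁, h, heq'.symm⟩
    set z := f^[m] y0 with hz
    set q := m' - m with hq
    have hq1 : 1 ≤ q := by omega
    have hperz : f^[q] z = z := by
      rw [hz, ← Function.iterate_add_apply, hq]
      have h : m' - m + m = m' := by omega
      rw [h, ← heqm]
    have hzω : z ∈ omegaSet f x := omega_iter hf hy0 m
    -- a lower bound on p
    have hple : ∀ n, n + p 0 ≤ p n := by
      intro n
      induction n with
      | zero => simp
      | succ n ih => have := hpmono (show n < n + 1 by omega); omega
    have hqP : q < p q := by have := hple q; omega
    have hzQ : z ∈ ⋃ i ∈ Finset.range (p q), f^[i] '' J q := by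
      have h := homega hzω
      rw [Set.mem_iInter] at h
      exact h q
    simp only [Set.mem_iUnion, Finset.mem_range, exists_prop] at hzQ
    obtain ⟨i, hi, hzi⟩ := hzQ
    have hz2 : z ∈ f^[(q + i) % p q] '' J q := by
      have := aux_mem f (J q) (p q) (hJper q) hzi q
      rwa [hperz] at this
    have hqpos : 0 < p q := by omega
    have heqi : (q + i) % p q = i := by
      by_contra hne'
      exact Set.disjoint_left.mp
        (hJdisj q i ((q + i) % p q) hi (Nat.mod_lt _ hqpos) (fun h => hne' h.symm))
        hzi hz2
    rcases lt_or_ge (q + i) (p q) with h | h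
    · rw [Nat.mod_eq_of_lt h] at heqi; omega
    · rw [Nat.mod_eq_sub_mod h, Nat.mod_eq_of_lt (by omega)] at heqi; omega
end

section
/- Let t ≥ 2, let s ∈ [0, t−2], and let h be an odd multiple of 2^s. Let {K_a : a ∈ {0,1}^u, u ≤ t} be a nested family of pairwise disjoint (per level) nondegenerate closed subintervals of [0,1] with the 2-adic cyclic addition structure, and for a ∈ {0,1}^s let a_*, a_∘, a^∘, a^* denote the four children a00, a01, a10, a11 ordered so that K_{a_*} < K_{a_∘} < K_{a^∘} < K_{a^*}. Define ε_s = max_{a∈{0,1}^s} dist(K_{a_*}, K_{a^*}) and dist_∞(K_b, K_c) = max_{i≥0} dist(K_{b+i}, K_{c+i}) (with indices in ℤ/2^tℤ under 2-adic encoding). Then dist_∞(K_b, K_{b+h}) ≥ ε_s for every b ∈ {0,1}^t. -/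
open Filter Metric Set
open scoped Classical

open RQA

/-!
Choose `a` realising `ε_s`. The outer children `a_*` and `a^*` agree below position `s` and
differ at position `s`, so modulo `2^(s+2)` their residues differ by an odd multiple of `2^s`,
hence by `±h`. Shifting `n` until `n + i` lies in `[a_*]` (or in `[a^*]`, depending on the sign)
puts `n + h + i` in the other cylinder, and the nesting of the intervals gives the bound.
-/

namespace RQA

lemma word_castLE {u t : ℕ} (h : u ≤ t) (m : ℕ) :
    (fun i : Fin u => word t m (Fin.castLE h i)) = word u m := rfl

lemma exists_word_eq {u : ℕ} (w : Fin u → Bool) : ∃ c, word u c = w :=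
  ⟨(BitVec.ofBoolListLE (List.ofFn w)).toNat, funext fun i => by
    simp only [word, BitVec.testBit_toNat, BitVec.getLsbD_ofBoolListLE]
    simp⟩

lemma word_eq_of_natCast_eq {u m m' : ℕ} (h : (m : ZMod (2 ^ u)) = m') :
    word u m = word u m' := by
  rw [ZMod.natCast_eq_natCast_iff'] at h
  funext i
  have hmod (k : ℕ) : (k % 2 ^ u).testBit i = k.testBit i := by simp [i.isLt]
  simp only [word]
  rw [← hmod m, h, hmod]

lemma setDist_comm (A B : Set ℝ) : setDist A B = setDist B A := by
  unfold setDist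
  congr 1
  ext d
  constructor <;>
  · rintro ⟨a, ha, b, hb, rfl⟩
    exact ⟨b, hb, a, ha, dist_comm a b⟩

lemma setDist_le_setDist_of_subset {A B A' B' : Set ℝ} (hA : A' ⊆ A) (hB : B' ⊆ B)
    (hA' : A'.Nonempty) (hB' : B'.Nonempty) : setDist A B ≤ setDist A' B' := by
  apply csInf_le_csInf
  · exact ⟨0, by rintro d ⟨a, _, b, _, rfl⟩; exact dist_nonneg⟩
  · obtain ⟨a, ha⟩ := hA'
    obtain ⟨b, hb⟩ := hB'
    exact ⟨_, a, ha, b, hb, rfl⟩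
  · rintro d ⟨a, ha, b, hb, rfl⟩
    exact ⟨a, hA ha, b, hB hb, rfl⟩

lemma natCast_odd_mul_two_pow_eq_sub_or_sub {s c c' j : ℕ}
    (hlow : ∀ i < s, c.testBit i = c'.testBit i) (hbit : c.testBit s ≠ c'.testBit s)
    (hj : Odd j) :
    ((j * 2 ^ s : ℕ) : ZMod (2 ^ (s + 2))) = c' - c ∨
      ((j * 2 ^ s : ℕ) : ZMod (2 ^ (s + 2))) = c - c' := by
  have hmod : c % 2 ^ s = c' % 2 ^ s :=
    Nat.eq_of_testBit_eq fun i => by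
      by_cases hi : i < s <;> simp [Nat.testBit_mod_two_pow, hi, hlow]
  have hpar : c / 2 ^ s % 2 ≠ c' / 2 ^ s % 2 := fun h =>
    hbit (by simp [Nat.testBit_eq_decide_div_mod_eq, h])
  have hc := Nat.div_add_mod c (2 ^ s)
  have hc' := Nat.div_add_mod c' (2 ^ s)
  rw [hmod] at hc
  generalize c / 2 ^ s = q, c' / 2 ^ s = q', c' % 2 ^ s = r at *
  subst hc hc'
  -- `j` and `q' - q` are both odd, so they agree modulo 4 up to sign
  have h4 : (4 : ℤ) ∣ q' - q - j ∨ (4 : ℤ) ∣ q - q' - j := by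
    obtain ⟨k, rfl⟩ := hj
    omega
  simp only [← Int.cast_natCast (R := ZMod _), ← Int.cast_sub,
    ZMod.intCast_eq_intCast_iff_dvd_sub]
  push_cast
  rcases h4 with ⟨k, hk⟩ | ⟨k, hk⟩
  · exact Or.inl ⟨k, by linear_combination (2 : ℤ) ^ s * hk⟩
  · exact Or.inr ⟨k, by linear_combination (2 : ℤ) ^ s * hk⟩

lemma exists_natCast_add_eq_or_swap {M : ℕ} [NeZero M] {x y : ZMod M} {h : ℕ}
    (hh : (h : ZMod M) = y - x ∨ (h : ZMod M) = x - y) (n : ℕ) :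
    ∃ i : ℕ, (((n + i : ℕ) : ZMod M) = x ∧ ((n + h + i : ℕ) : ZMod M) = y) ∨
      (((n + i : ℕ) : ZMod M) = y ∧ ((n + h + i : ℕ) : ZMod M) = x) := by
  rcases hh with hh | hh
  · refine ⟨(x - n).val, Or.inl ⟨?_, ?_⟩⟩ <;> push_cast [ZMod.natCast_zmod_val, hh] <;> ring
  · refine ⟨(y - n).val, Or.inr ⟨?_, ?_⟩⟩ <;> push_cast [ZMod.natCast_zmod_val, hh] <;> ring

lemma exists_child_ne_at {s : ℕ} {a : Fin s → Bool} {ch : Fin 4 → Fin (s + 2) → Bool}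
    (hch_all : ∀ w : Fin (s + 2) → Bool,
      (∀ i : Fin s, w (Fin.castLE (by omega) i) = a i) → ∃ k, w = ch k)
    (w : Fin (s + 2) → Bool) (hw : ∀ i : Fin s, w (Fin.castLE (by omega) i) = a i) :
    ∃ k, ch k ⟨s, by omega⟩ ≠ w ⟨s, by omega⟩ := by
  obtain ⟨k, hk⟩ := hch_all (Function.update w ⟨s, by omega⟩ !(w ⟨s, by omega⟩)) fun i => by
    rw [Function.update_of_ne (Fin.ne_of_val_ne (by simp; omega)), hw]
  exact ⟨k, by simp [← hk]⟩

lemma outerChildren_ne_at {s : ℕ} {K : ∀ u : ℕ, (Fin u → Bool) → Set ℝ}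
    (hconn : ∀ w, (K (s + 1) w).OrdConnected) (hne : ∀ w, (K (s + 2) w).Nonempty)
    (hnest : ∀ w : Fin (s + 2) → Bool, K (s + 2) w ⊆ K (s + 1) (Fin.init w))
    (hdisj : ∀ v w : Fin (s + 1) → Bool, v ≠ w → Disjoint (K (s + 1) v) (K (s + 1) w))
    {a : Fin s → Bool} {ch : Fin 4 → Fin (s + 2) → Bool}
    (hch_ext : ∀ (k : Fin 4) (i : Fin s), ch k (Fin.castLE (by omega) i) = a i)
    (hch_all : ∀ w : Fin (s + 2) → Bool,
      (∀ i : Fin s, w (Fin.castLE (by omega) i) = a i) → ∃ k, w = ch k)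
    (hch_ord : ∀ k l : Fin 4, k < l → ∀ u ∈ K (s + 2) (ch k), ∀ v ∈ K (s + 2) (ch l), u < v) :
    ch 0 ⟨s, by omega⟩ ≠ ch 3 ⟨s, by omega⟩ := by
  -- otherwise `a_*` and `a^*` share their parent interval, which then contains the middle child
  -- whose last letter differs
  intro h03
  have hinit : Fin.init (ch 0) = Fin.init (ch 3) := by
    funext i
    induction i using Fin.lastCases with
    | last => exact h03
    | cast i => exact (hch_ext 0 i).trans (hch_ext 3 i).symm
  obtain ⟨m, hm⟩ := exists_child_ne_at hch_all (ch 0) (hch_ext 0)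
  have hm0 : 0 < m := Fin.pos_of_ne_zero (by rintro rfl; exact hm rfl)
  have hm3 : m < 3 := lt_of_le_of_ne (Fin.le_last m) (by rintro rfl; exact hm h03.symm)
  obtain ⟨u, hu⟩ := hne (ch 0)
  obtain ⟨x, hx⟩ := hne (ch m)
  obtain ⟨v, hv⟩ := hne (ch 3)
  have hx0 : x ∈ K (s + 1) (Fin.init (ch 0)) :=
    (hconn _).out (hnest _ hu) (hinit ▸ hnest _ hv)
      ⟨(hch_ord 0 m hm0 u hu x hx).le, (hch_ord m 3 hm3 x hx v hv).le⟩
  have hinit_ne : Fin.init (ch 0) ≠ Fin.init (ch m) :=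
    fun h => hm (congrFun h (Fin.last s)).symm
  exact Set.disjoint_left.mp (hdisj _ _ hinit_ne) hx0 (hnest _ hx)

end RQA

/-- if `h` is an odd multiple of `2^s` (`s ≤ t−2`), then
`dist_∞(K_b, K_{b+h}) ≥ ε_s` for every `b ∈ {0,1}^t`; since
`dist_∞(K_b,K_c) = sup_{i≥0} dist(K_{b+i},K_{c+i})`, the conclusion is stated as
the existence of some shift `i` with `dist(K_{b+i},K_{b+h+i}) ≥ ε_s`. Words are
identified with residues mod `2^t` via the 2-adic encoding (`word t n`). The
four children `a00,a01,a10,a11` of `a ∈ {0,1}^s`, ordered from left to right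
as subintervals, are given by `ch a 0 = a_*, ch a 1 = a_∘, ch a 2 = a^∘,
ch a 3 = a^*`, and `ε_s = max_a dist(K_{a_*}, K_{a^*})`. -/
theorem stmt_15 (t s : ℕ) (hs : s + 2 ≤ t)
    (K : ∀ u : ℕ, (Fin u → Bool) → Set ℝ)
    (hK : ∀ u, u ≤ t → ∀ a : Fin u → Bool,
      ∃ y z : ℝ, y < z ∧ 0 ≤ y ∧ z ≤ 1 ∧ K u a = Icc y z)
    (hnest : ∀ (u u' : ℕ) (huu' : u ≤ u'), u' ≤ t → ∀ b : Fin u' → Bool,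
      K u' b ⊆ K u (fun i => b (Fin.castLE huu' i)))
    (hdisj : ∀ u, u ≤ t → ∀ a b : Fin u → Bool, a ≠ b → Disjoint (K u a) (K u b))
    (ch : (Fin s → Bool) → Fin 4 → (Fin (s + 2) → Bool))
    (hch_ext : ∀ (a : Fin s → Bool) (k : Fin 4) (i : Fin s),
      ch a k (Fin.castLE (by omega) i) = a i)
    (hch_all : ∀ (a : Fin s → Bool) (w : Fin (s + 2) → Bool),
      (∀ i : Fin s, w (Fin.castLE (by omega) i) = a i) → ∃ k : Fin 4, w = ch a k)
    (hch_ord : ∀ (a : Fin s → Bool) (k l : Fin 4), k < l →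
      ∀ u ∈ K (s + 2) (ch a k), ∀ v ∈ K (s + 2) (ch a l), u < v)
    (εs : ℝ)
    (hεs : IsGreatest
      (Set.range fun a : Fin s → Bool =>
        setDist (K (s + 2) (ch a 0)) (K (s + 2) (ch a 3))) εs)
    (h j : ℕ) (hj : Odd j) (hh : h = j * 2 ^ s) :
    ∀ n : ℕ, ∃ i : ℕ,
      εs ≤ setDist (K t (word t (n + i))) (K t (word t (n + h + i))) := by
  intro n
  obtain ⟨a, ha⟩ := hεs.1
  have hne : ∀ u ≤ t, ∀ w : Fin u → Bool, (K u w).Nonempty := fun u hu w => by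
    obtain ⟨y, z, hyz, -, -, hKw⟩ := hK u hu w
    exact hKw ▸ nonempty_Icc.mpr hyz.le
  have hbit := outerChildren_ne_at (s := s) (K := K)
    (fun w => by obtain ⟨y, z, -, -, -, hKw⟩ := hK (s + 1) (by omega) w; rw [hKw]; infer_instance)
    (hne (s + 2) hs) (hnest (s + 1) (s + 2) (by omega) hs) (hdisj (s + 1) (by omega))
    (hch_ext a) (hch_all a) (hch_ord a)
  obtain ⟨c, hc⟩ := exists_word_eq (ch a 0)
  obtain ⟨c', hc'⟩ := exists_word_eq (ch a 3)
  have hlow : ∀ i < s, c.testBit i = c'.testBit i := fun i hi => by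
    simpa only [← hc, ← hc', word, Fin.val_castLE] using
      (hch_ext a 0 ⟨i, hi⟩).trans (hch_ext a 3 ⟨i, hi⟩).symm
  have hjump := natCast_odd_mul_two_pow_eq_sub_or_sub hlow (by rwa [← hc, ← hc'] at hbit) hj
  rw [← hh] at hjump
  obtain ⟨i, hi⟩ := exists_natCast_add_eq_or_swap hjump n
  have hdist : ∀ {m m' : ℕ} {w w' : Fin (s + 2) → Bool}, word (s + 2) m = w →
      word (s + 2) m' = w' →
      setDist (K (s + 2) w) (K (s + 2) w') ≤ setDist (K t (word t m)) (K t (word t m')) :=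
    fun hw hw' => setDist_le_setDist_of_subset
      (hw ▸ word_castLE hs _ ▸ hnest (s + 2) t hs le_rfl _)
      (hw' ▸ word_castLE hs _ ▸ hnest (s + 2) t hs le_rfl _) (hne t le_rfl _) (hne t le_rfl _)
  refine ⟨i, ?_⟩
  rcases hi with ⟨h0, h3⟩ | ⟨h3, h0⟩
  · exact ha ▸ hdist ((word_eq_of_natCast_eq h0).trans hc) ((word_eq_of_natCast_eq h3).trans hc')
  · exact ha ▸ (setDist_comm _ _).trans_le
      (hdist ((word_eq_of_natCast_eq h3).trans hc') ((word_eq_of_natCast_eq h0).trans hc))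
end
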